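/- arXiv:1308.0791 — 13 statements merged into one kernel-verified Lean document; each statement's English description precedes it below -/
import Mathlib

section
/- For every n-dimensional convex body K ⊆ ℝⁿ, the t-central illumination number equals the central illumination number: c''(K) = c'(K). -/
open Metric Set

/-- The central illumination number `c'(K)`: the least `m` for which there exist points
`y_1, …, y_m ∈ ℝⁿ ∖ K` such that every `x ∈ K` is c-illuminated by some `y_i`,
i.e. `x + ε • (x - y_i) ∈ int K` for some `ε > 0`. -/
noncomputable def cIllum' {n : ℕ} (K : Set (EuclideanSpace ℝ (Fin n))) : ℕ∞ :=
  sInf {m : ℕ∞ | ∃ s : Finset (EuclideanSpace ℝ (Fin n)), (s.card : ℕ∞) = m ∧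
    (∀ y ∈ s, y ∉ K) ∧ ∀ x ∈ K, ∃ y ∈ s, ∃ ε : ℝ, 0 < ε ∧ x + ε • (x - y) ∈ interior K}

/-- The t-central illumination number `c''(K)`: the least `m` for which there exist points
`y_1, …, y_m ∈ ℝⁿ ∖ K` such that every `x ∈ K` is t-c-illuminated by some `y_i`,
i.e. `x + ε • (x - y_i) ∈ K` for some `ε > 0`. -/
noncomputable def cIllum'' {n : ℕ} (K : Set (EuclideanSpace ℝ (Fin n))) : ℕ∞ :=
  sInf {m : ℕ∞ | ∃ s : Finset (EuclideanSpace ℝ (Fin n)), (s.card : ℕ∞) = m ∧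
    (∀ y ∈ s, y ∉ K) ∧ ∀ x ∈ K, ∃ y ∈ s, ∃ ε : ℝ, 0 < ε ∧ x + ε • (x - y) ∈ K}

/-- For every convex body `K ⊆ ℝⁿ`, the t-central illumination number equals the central
illumination number: `c''(K) = c'(K)`. -/
theorem tCentral_eq_central_illumination {n : ℕ} (K : Set (EuclideanSpace ℝ (Fin n)))
    (hKc : IsCompact K) (hKconv : Convex ℝ K) (hKint : (interior K).Nonempty) :
    cIllum'' K = cIllum' K := by
  classical
  obtain ⟨p, hp⟩ := hKint
  unfold cIllum' cIllum''
  apply congrArg sInf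
  ext m
  constructor
  · rintro ⟨s, hcard, hout, hillum⟩
    have hinj : Function.Injective (fun y : EuclideanSpace ℝ (Fin n) => (2:ℝ) • y - p) := by
      intro a b hab
      simp only [sub_left_inj] at hab
      have := smul_right_injective (EuclideanSpace ℝ (Fin n)) (two_ne_zero (α := ℝ)) hab
      exact this
    refine ⟨s.image (fun y => (2:ℝ) • y - p), ?_, ?_, ?_⟩
    · rw [Finset.card_image_of_injective _ hinj]; exact hcard
    · intro y' hy'
      simp only [Finset.mem_image] at hy'
      obtain ⟨y, hy, rfl⟩ := hy'
      intro hmem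
      apply hout y hy
      have hrep : y = (1/2 : ℝ) • ((2:ℝ) • y - p) + (1/2 : ℝ) • p := by
        module
      rw [hrep]
      exact hKconv hmem (interior_subset hp) (by norm_num) (by norm_num) (by norm_num)
    · intro x hx
      obtain ⟨y, hy, ε, hε, hz⟩ := hillum x hx
      have h2 : (0:ℝ) < 2 + ε := by linarith
      refine ⟨(2:ℝ) • y - p, Finset.mem_image_of_mem _ hy, ε / (2 + ε), by positivity, ?_⟩
      have key : x + (ε / (2 + ε)) • (x - ((2:ℝ) • y - p)) =
          (ε / (2 + ε)) • p + (1 - ε / (2 + ε)) • (x + ε • (x - y)) := by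
        have h2' : (2 + ε) ≠ 0 := ne_of_gt h2
        match_scalars <;> field_simp <;> first | (left; ring) | ring
      rw [key]
      exact hKconv.combo_interior_self_mem_interior hp hz (by positivity)
        (by rw [sub_nonneg, div_le_one h2]; linarith) (by ring)
  · rintro ⟨s, hcard, hout, hillum⟩
    refine ⟨s, hcard, hout, fun x hx => ?_⟩
    obtain ⟨y, hy, ε, hε, h⟩ := hillum x hx
    exact ⟨y, hy, ε, hε, interior_subset h⟩
end

section
/- Let K ⊆ ℝⁿ be a convex body. If points y_1,…,y_m ∈ ℝⁿ∖K are such that every x ∈ K is t-c-illuminated by some y_i, and if λ_1,…,λ_m > 1 and c_1,…,c_m ∈ int(K), then each point z_i := c_i + λ_i(y_i − c_i) lies in ℝⁿ∖K, and every x ∈ K is c-illuminated by some z_i. -/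
/-!
If `z = c + λ (y - c)` lay in `K`, then `y`, which lies strictly between the interior point `c`
and `z`, would be an interior point of `K`. For the illumination, let the ray from `y` through
`x` meet `K` at `w = x + ε (x - y)`. The points `x`, `y`, `c`, `w`, `z` are coplanar, and the ray
from `z` through `x` crosses the segment `[c, w]` at a point `a c + (1 - a) w` with `a > 0`,
which is interior to `K` because `c` is.
-/

variable {E : Type*} [AddCommGroup E] [Module ℝ E]

-- Unlike in the paper, the light source `y` is not required to lie outside `K`.
def TCIlluminates (K : Set E) (y x : E) : Prop :=
  ∃ ε : ℝ, 0 < ε ∧ x + ε • (x - y) ∈ K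

def CIlluminates [TopologicalSpace E] (K : Set E) (y x : E) : Prop :=
  ∃ ε : ℝ, 0 < ε ∧ x + ε • (x - y) ∈ interior K

lemma add_smul_sub_homothety_eq_combo {x y c : E} {ε lam μ : ℝ}
    (hμ : μ * (ε * (lam - 1) + lam) = ε) :
    x + μ • (x - (c + lam • (y - c))) =
      (μ * (lam - 1)) • c + (1 - μ * (lam - 1)) • (x + ε • (x - y)) := by
  match_scalars
  · linear_combination hμ
  · ring
  · linear_combination -hμ

variable [TopologicalSpace E] [IsTopologicalAddGroup E] [ContinuousConstSMul ℝ E]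

theorem Convex.add_smul_sub_notMem_closure {K : Set E} (hK : Convex ℝ K) {c y : E}
    (hc : c ∈ interior K) (hy : y ∉ interior K) {lam : ℝ} (hlam : 1 < lam) :
    c + lam • (y - c) ∉ closure K := by
  intro hz
  have hlam₀ : lam ≠ 0 := by positivity
  have hy' := hK.add_smul_sub_mem_interior' hz hc (t := 1 - lam⁻¹)
    ⟨sub_pos.2 (inv_lt_one_of_one_lt₀ hlam), sub_le_self _ (inv_nonneg.2 (by linarith))⟩
  refine hy ?_
  convert hy' using 1
  match_scalars <;> field_simp <;> ring

theorem TCIlluminates.cIlluminates_homothety {K : Set E} {x y c : E} (h : TCIlluminates K y x)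
    (hK : Convex ℝ K) (hc : c ∈ interior K) {lam : ℝ} (hlam : 1 < lam) :
    CIlluminates K (c + lam • (y - c)) x := by
  obtain ⟨ε, hε, hw⟩ := h
  have hden : 0 < ε * (lam - 1) + lam := by nlinarith
  set μ := ε / (ε * (lam - 1) + lam)
  have hμ : μ * (ε * (lam - 1) + lam) = ε := div_mul_cancel₀ ε hden.ne'
  have hμ₀ : 0 < μ := by positivity
  refine ⟨μ, hμ₀, ?_⟩
  rw [add_smul_sub_homothety_eq_combo hμ]
  exact hK.combo_interior_closure_mem_interior hc (subset_closure hw)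
    (mul_pos hμ₀ (sub_pos.2 hlam)) (by nlinarith) (add_sub_cancel _ _)

theorem tc_illumination_to_c_illumination_general {n m : ℕ} (K : Set (EuclideanSpace ℝ (Fin n)))
    (hKconv : Convex ℝ K)
    (y : Fin m → EuclideanSpace ℝ (Fin n)) (hy : ∀ i, y i ∉ K)
    (hillum : ∀ x ∈ K, ∃ i, ∃ ε : ℝ, 0 < ε ∧ x + ε • (x - y i) ∈ K)
    (lam : Fin m → ℝ) (hlam : ∀ i, 1 < lam i)
    (c : Fin m → EuclideanSpace ℝ (Fin n)) (hc : ∀ i, c i ∈ interior K) :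
    (∀ i, c i + lam i • (y i - c i) ∉ K) ∧
    (∀ x ∈ K, ∃ i, ∃ ε : ℝ, 0 < ε ∧
      x + ε • (x - (c i + lam i • (y i - c i))) ∈ interior K) := by
  refine ⟨fun i hz => ?_, fun x hx => ?_⟩
  · exact hKconv.add_smul_sub_notMem_closure (hc i) (fun h => hy i (interior_subset h))
      (hlam i) (subset_closure hz)
  · obtain ⟨i, hi⟩ := hillum x hx
    exact ⟨i, TCIlluminates.cIlluminates_homothety hi hKconv (hc i) (hlam i)⟩

/-- If points `y_1, …, y_m ∈ ℝⁿ ∖ K` t-c-illuminate the convex body `K`, then for any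
`λ_1, …, λ_m > 1` and `c_1, …, c_m ∈ int K`, the points `z_i = c_i + λ_i • (y_i - c_i)`
lie outside `K` and c-illuminate `K`. -/
theorem tc_illumination_to_c_illumination {n m : ℕ} (K : Set (EuclideanSpace ℝ (Fin n)))
    (hKc : IsCompact K) (hKconv : Convex ℝ K) (hKint : (interior K).Nonempty)
    (y : Fin m → EuclideanSpace ℝ (Fin n)) (hy : ∀ i, y i ∉ K)
    (hillum : ∀ x ∈ K, ∃ i, ∃ ε : ℝ, 0 < ε ∧ x + ε • (x - y i) ∈ K)
    (lam : Fin m → ℝ) (hlam : ∀ i, 1 < lam i)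
    (c : Fin m → EuclideanSpace ℝ (Fin n)) (hc : ∀ i, c i ∈ interior K) :
    (∀ i, c i + lam i • (y i - c i) ∉ K) ∧
    (∀ x ∈ K, ∃ i, ∃ ε : ℝ, 0 < ε ∧
      x + ε • (x - (c i + lam i • (y i - c i))) ∈ interior K) :=
  tc_illumination_to_c_illumination_general K hKconv y hy hillum lam hlam c hc
end

section
/- For every convex body K ⊆ ℝⁿ, sup{ε > 0 : i(K,ε) < ∞} = sup{ε > 0 : c(K,ε) < ∞} = R(K), the circumradius of K. -/
open Metric Set
open scoped RealInnerProductSpace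

/-- The quantified t-illumination number `i(K,ε)`: the least `m` for which there exist
unit vectors `r_1, …, r_m` such that every `x ∈ K` satisfies `x + ε • r_i ∈ K` for some `i`;
`∞` if no finite such family exists. -/
noncomputable def iq {n : ℕ} (K : Set (EuclideanSpace ℝ (Fin n))) (ε : ℝ) : ℕ∞ :=
  sInf {m : ℕ∞ | ∃ s : Finset (EuclideanSpace ℝ (Fin n)), (s.card : ℕ∞) = m ∧
    (∀ r ∈ s, ‖r‖ = 1) ∧ ∀ x ∈ K, ∃ r ∈ s, x + ε • r ∈ K}

/-- The quantified illumination number `c(K,ε)`: the least `m` for which there exist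
unit vectors `r_1, …, r_m` such that every `x ∈ K` satisfies `x + ε • r_i ∈ int K` for some `i`;
`∞` if no finite such family exists. -/
noncomputable def cq {n : ℕ} (K : Set (EuclideanSpace ℝ (Fin n))) (ε : ℝ) : ℕ∞ :=
  sInf {m : ℕ∞ | ∃ s : Finset (EuclideanSpace ℝ (Fin n)), (s.card : ℕ∞) = m ∧
    (∀ r ∈ s, ‖r‖ = 1) ∧ ∀ x ∈ K, ∃ r ∈ s, x + ε • r ∈ interior K}

/-- `B(c, R)` is the circumball of `K`: a closed ball containing `K` of minimal radius. -/
def IsCircumball {n : ℕ} (K : Set (EuclideanSpace ℝ (Fin n)))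
    (c : EuclideanSpace ℝ (Fin n)) (R : ℝ) : Prop :=
  K ⊆ closedBall c R ∧ ∀ (c' : EuclideanSpace ℝ (Fin n)) (R' : ℝ), K ⊆ closedBall c' R' → R ≤ R'

/-- The circumcenter of a compact convex set lies in the set. -/
lemma circumcenter_mem_aux {n : ℕ} (K : Set (EuclideanSpace ℝ (Fin n))) (hKc : IsCompact K)
    (hKconv : Convex ℝ K) (hKne : K.Nonempty) (c : EuclideanSpace ℝ (Fin n)) (R : ℝ)
    (hsub : K ⊆ closedBall c R)
    (hmin : ∀ (c' : EuclideanSpace ℝ (Fin n)) (R' : ℝ), K ⊆ closedBall c' R' → R ≤ R') :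
    c ∈ K := by
  by_contra hc
  obtain ⟨v, hvK, hv⟩ := exists_norm_eq_iInf_of_complete_convex hKne hKc.isComplete hKconv c
  have hiff := (norm_eq_iInf_iff_real_inner_le_zero hKconv hvK (u := c)).mp hv
  have hd : 0 < ‖c - v‖ := by
    rw [norm_pos_iff, sub_ne_zero]
    rintro rfl; exact hc hvK
  have hdR : ‖c - v‖ ≤ R := by
    have := hsub hvK
    rw [mem_closedBall, dist_eq_norm] at this
    rw [← norm_neg]; simpa [neg_sub] using this
  have hR : 0 < R := lt_of_lt_of_le hd hdR
  have key : ∀ y ∈ K, ‖y - v‖ ≤ Real.sqrt (R ^ 2 - ‖c - v‖ ^ 2) := by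
    intro y hy
    have h1 : ‖y - c‖ ≤ R := by
      have := hsub hy; rwa [mem_closedBall, dist_eq_norm] at this
    have h2 : ⟪c - v, y - v⟫ ≤ 0 := hiff y hy
    have e : ‖y - c‖ ^ 2 = ‖y - v‖ ^ 2 - 2 * ⟪c - v, y - v⟫ + ‖c - v‖ ^ 2 := by
      have : y - c = (y - v) - (c - v) := by abel
      rw [this, norm_sub_sq_real, real_inner_comm]
    have h3 : ‖y - v‖ ^ 2 ≤ R ^ 2 - ‖c - v‖ ^ 2 := by
      nlinarith [norm_nonneg (y - c), norm_nonneg (y - v)]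
    calc ‖y - v‖ = Real.sqrt (‖y - v‖ ^ 2) := by
          rw [Real.sqrt_sq (norm_nonneg _)]
      _ ≤ Real.sqrt (R ^ 2 - ‖c - v‖ ^ 2) := Real.sqrt_le_sqrt h3
  have hRle : R ≤ Real.sqrt (R ^ 2 - ‖c - v‖ ^ 2) := by
    apply hmin v
    intro y hy
    rw [mem_closedBall, dist_eq_norm]
    exact key y hy
  have : Real.sqrt (R ^ 2 - ‖c - v‖ ^ 2) < R := by
    rw [Real.sqrt_lt' hR]
    nlinarith
  linarith

lemma exists_dir_aux {n : ℕ} (K : Set (EuclideanSpace ℝ (Fin n)))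
    (hKconv : Convex ℝ K) (hKint : (interior K).Nonempty) (R : ℝ)
    (hmin : ∀ (c' : EuclideanSpace ℝ (Fin n)) (R' : ℝ), K ⊆ closedBall c' R' → R ≤ R')
    {ε : ℝ} (hε : 0 < ε) (hεR : ε < R) (x : EuclideanSpace ℝ (Fin n)) (hx : x ∈ K) :
    ∃ r : EuclideanSpace ℝ (Fin n), ‖r‖ = 1 ∧ x + ε • r ∈ interior K := by
  obtain ⟨z, hz⟩ := hKint
  have hy : ∃ y ∈ K, ε < ‖y - x‖ := by
    by_contra h
    push_neg at h
    have : K ⊆ closedBall x ε := fun y hy => by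
      rw [mem_closedBall, dist_eq_norm]; exact h y hy
    exact absurd (hmin x ε this) (not_le.mpr hεR)
  obtain ⟨y, hyK, hyx⟩ := hy
  set δ := ‖y - x‖ - ε with hδ
  have hδpos : 0 < δ := by simp [hδ]; linarith
  set t : ℝ := min 1 (δ / (‖z - y‖ + 1)) with ht
  have hzy : (0:ℝ) < ‖z - y‖ + 1 := by positivity
  have htpos : 0 < t := lt_min one_pos (div_pos hδpos hzy)
  have ht1 : t ≤ 1 := min_le_left _ _
  set y' := y + t • (z - y) with hy'
  have hy'int : y' ∈ interior K :=
    hKconv.add_smul_sub_mem_interior hyK hz ⟨htpos, ht1⟩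
  have hy'x : ε < ‖y' - x‖ := by
    have h1 : ‖t • (z - y)‖ < δ := by
      rw [norm_smul, Real.norm_eq_abs, abs_of_pos htpos]
      calc t * ‖z - y‖ ≤ δ / (‖z - y‖ + 1) * ‖z - y‖ := by
            apply mul_le_mul_of_nonneg_right (min_le_right _ _) (norm_nonneg _)
        _ < δ := by
            rw [div_mul_eq_mul_div, div_lt_iff₀ hzy]
            nlinarith [norm_nonneg (z - y)]
    have h2 : ‖y - x‖ ≤ ‖y' - x‖ + ‖t • (z - y)‖ := by
      have : y - x = (y' - x) - t • (z - y) := by rw [hy']; abel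
      rw [this]; exact norm_sub_le _ _
    linarith
  have hy'norm : 0 < ‖y' - x‖ := lt_trans hε hy'x
  refine ⟨‖y' - x‖⁻¹ • (y' - x), ?_, ?_⟩
  · rw [norm_smul, norm_inv, Real.norm_eq_abs, abs_of_pos hy'norm,
      inv_mul_cancel₀ (ne_of_gt hy'norm)]
  · have : x + ε • ‖y' - x‖⁻¹ • (y' - x) = x + (ε / ‖y' - x‖) • (y' - x) := by
      rw [smul_smul, div_eq_mul_inv]
    rw [this]
    exact hKconv.add_smul_sub_mem_interior hx hy'int
      ⟨div_pos hε hy'norm, (div_le_one hy'norm).mpr (le_of_lt hy'x)⟩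

lemma finset_dir_aux {n : ℕ} (K : Set (EuclideanSpace ℝ (Fin n))) (hKc : IsCompact K) {ε : ℝ}
    (hdir : ∀ x ∈ K, ∃ r : EuclideanSpace ℝ (Fin n), ‖r‖ = 1 ∧ x + ε • r ∈ interior K) :
    ∃ s : Finset (EuclideanSpace ℝ (Fin n)),
      (∀ r ∈ s, ‖r‖ = 1) ∧ ∀ x ∈ K, ∃ r ∈ s, x + ε • r ∈ interior K := by
  choose! r hr1 hr2 using hdir
  set U : K → Set (EuclideanSpace ℝ (Fin n)) :=
    fun p => (fun z => z + ε • r p) ⁻¹' (interior K) with hU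
  have hUopen : ∀ p, IsOpen (U p) := fun p =>
    isOpen_interior.preimage (by continuity)
  have hcov : K ⊆ ⋃ p, U p := by
    intro x hx
    exact mem_iUnion.mpr ⟨⟨x, hx⟩, hr2 x hx⟩
  obtain ⟨t, ht⟩ := hKc.elim_finite_subcover U hUopen hcov
  classical
  refine ⟨t.image (fun p : K => r p.1), ?_, ?_⟩
  · intro q hq
    obtain ⟨p, hp, rfl⟩ := Finset.mem_image.mp hq
    exact hr1 p.1 p.2
  · intro x hx
    obtain ⟨p, hp, hxU⟩ := by
      have := ht hx
      rw [mem_iUnion₂] at this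
      exact this
    exact ⟨r p, Finset.mem_image_of_mem _ hp, hxU⟩

lemma sSup_between_aux {S : Set ℝ} {R : ℝ} (h1 : Ioo 0 R ⊆ S) (h2 : S ⊆ Ioc 0 R)
    (hR : 0 ≤ R) : sSup S = R := by
  rcases eq_or_lt_of_le hR with hR0 | hR0
  · have : S = ∅ := by
      apply eq_empty_of_subset_empty
      intro x hx
      have := h2 hx
      rw [← hR0] at this
      exact absurd (lt_of_lt_of_le this.1 this.2) (lt_irrefl 0)
    rw [this, Real.sSup_empty, ← hR0]
  · have hne : S.Nonempty := ⟨R / 2, h1 ⟨by linarith, by linarith⟩⟩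
    have hbdd : BddAbove S := BddAbove.mono h2 bddAbove_Ioc
    apply le_antisymm
    · exact csSup_le hne (fun x hx => (h2 hx).2)
    · calc R = sSup (Ioo 0 R) := (csSup_Ioo hR0).symm
        _ ≤ sSup S := csSup_le_csSup hbdd (nonempty_Ioo.mpr hR0) h1

/-- For every convex body `K ⊆ ℝⁿ` with circumball `B(c,R)`,
`sup {ε > 0 : i(K,ε) < ∞} = sup {ε > 0 : c(K,ε) < ∞} = R(K)`. -/
theorem sup_finite_illumination_eq_circumradius {n : ℕ} (K : Set (EuclideanSpace ℝ (Fin n)))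
    (hKc : IsCompact K) (hKconv : Convex ℝ K) (hKint : (interior K).Nonempty)
    (c : EuclideanSpace ℝ (Fin n)) (R : ℝ) (hcirc : IsCircumball K c R) :
    sSup {ε : ℝ | 0 < ε ∧ iq K ε < ⊤} = R ∧ sSup {ε : ℝ | 0 < ε ∧ cq K ε < ⊤} = R := by
  obtain ⟨hsub, hmin⟩ := hcirc
  have hKne : K.Nonempty := hKint.mono interior_subset
  have hcK : c ∈ K := circumcenter_mem_aux K hKc hKconv hKne c R hsub hmin
  have hR0 : 0 ≤ R := by
    obtain ⟨x, hx⟩ := hKne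
    have := hsub hx
    rw [mem_closedBall] at this
    exact le_trans dist_nonneg this
  -- upper bounds
  have hub : ∀ (ε : ℝ) (r : EuclideanSpace ℝ (Fin n)), 0 < ε → ‖r‖ = 1 →
      c + ε • r ∈ K → ε ≤ R := by
    intro ε r hε hr hmem
    have := hsub hmem
    rw [mem_closedBall, dist_eq_norm] at this
    have h1 : ‖c + ε • r - c‖ = ε := by
      rw [add_sub_cancel_left, norm_smul, Real.norm_eq_abs, abs_of_pos hε, hr, mul_one]
    rwa [h1] at this
  have hub_i : ∀ ε : ℝ, 0 < ε → iq K ε < ⊤ → ε ≤ R := by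
    intro ε hε hlt
    obtain ⟨m, ⟨s, hcard, hunit, hill⟩, -⟩ := sInf_lt_iff.mp hlt
    obtain ⟨r, hrs, hmem⟩ := hill c hcK
    exact hub ε r hε (hunit r hrs) hmem
  have hub_c : ∀ ε : ℝ, 0 < ε → cq K ε < ⊤ → ε ≤ R := by
    intro ε hε hlt
    obtain ⟨m, ⟨s, hcard, hunit, hill⟩, -⟩ := sInf_lt_iff.mp hlt
    obtain ⟨r, hrs, hmem⟩ := hill c hcK
    exact hub ε r hε (hunit r hrs) (interior_subset hmem)
  -- lower bounds
  have hlo : ∀ ε ∈ Ioo (0:ℝ) R, cq K ε < ⊤ ∧ iq K ε < ⊤ := by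
    rintro ε ⟨hε, hεR⟩
    obtain ⟨s, hunit, hill⟩ := finset_dir_aux K hKc
      (fun x hx => exists_dir_aux K hKconv hKint R hmin hε hεR x hx)
    have hcoe : (s.card : ℕ∞) < ⊤ := by
      exact_mod_cast WithTop.coe_lt_top s.card
    constructor
    · exact lt_of_le_of_lt (sInf_le ⟨s, rfl, hunit, hill⟩) hcoe
    · refine lt_of_le_of_lt (sInf_le ⟨s, rfl, hunit, fun x hx => ?_⟩) hcoe
      obtain ⟨r, hrs, hmem⟩ := hill x hx
      exact ⟨r, hrs, interior_subset hmem⟩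
  constructor
  · exact sSup_between_aux (S := {ε : ℝ | 0 < ε ∧ iq K ε < ⊤})
      (fun ε hε => ⟨hε.1, (hlo ε hε).2⟩)
      (fun ε hε => ⟨hε.1, hub_i ε hε.1 hε.2⟩) hR0
  · exact sSup_between_aux (S := {ε : ℝ | 0 < ε ∧ cq K ε < ⊤})
      (fun ε hε => ⟨hε.1, (hlo ε hε).1⟩)
      (fun ε hε => ⟨hε.1, hub_c ε hε.1 hε.2⟩) hR0
end

section
/- For every convex body K ⊆ ℝⁿ, the function ε ↦ i(K,ε) is left-continuous on (0,∞): for every ε > 0 one has i(K,ε) = sup{ i(K,ε') : 0 < ε' < ε } (values in ℕ ∪ {∞}). -/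
open Metric Set
open scoped RealInnerProductSpace

/-!
Shrinking the step length keeps an illuminating family illuminating, by convexity, so
`ε ↦ i(K,ε)` is monotone and the supremum is at most `i(K,ε)`. Conversely, if `i(K,t) ≤ m` for
all `t < ε`, the steps `t` admitting `m` illuminating unit vectors form a closed set: it is the
projection of a closed subset of `ℝ × (S^{n-1})^m` along the compact factor. Hence `ε` is such a
step as well.
-/

theorem Convex.add_smul_mem_of_le {E : Type*} [AddCommGroup E] [Module ℝ E] {K : Set E}
    (hK : Convex ℝ K) {x r : E} (hx : x ∈ K) {t t' : ℝ} (hxt : x + t • r ∈ K)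
    (ht' : 0 ≤ t') (htt' : t' ≤ t) : x + t' • r ∈ K := by
  rcases ht'.eq_or_lt with rfl | ht'
  · simpa using hx
  have ht : t ≠ 0 := (ht'.trans_le htt').ne'
  have hscale : (t' / t) • t • r = t' • r := by rw [smul_smul, div_mul_cancel₀ _ ht]
  simpa [hscale] using hK.add_smul_mem hx hxt
    ⟨div_nonneg ht'.le (ht'.trans_le htt').le, div_le_one_of_le₀ htt' (ht'.trans_le htt').le⟩

theorem isClosed_setOf_exists_sphere_illuminating {E ι : Type*} [NormedAddCommGroup E]
    [NormedSpace ℝ E] [ProperSpace E] [Finite ι] {K : Set E} (hK : IsClosed K) :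
    IsClosed {t : ℝ | ∃ v : ι → sphere (0 : E) 1, ∀ x ∈ K, ∃ i, x + t • (v i : E) ∈ K} := by
  have hF : IsClosed {p : ℝ × (ι → sphere (0 : E) 1) |
      ∀ x ∈ K, ∃ i, x + p.1 • (p.2 i : E) ∈ K} := by
    simp only [ofPred_forall, ofPred_exists]
    exact isClosed_biInter fun x _ => isClosed_iUnion_of_finite fun i =>
      hK.preimage (by fun_prop)
  convert isClosedMap_fst_of_compactSpace _ hF using 1
  ext t
  simp

section Illumination

variable {n : ℕ} {K : Set (EuclideanSpace ℝ (Fin n))}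

theorem iq_le_iq_of_le (hK : Convex ℝ K) {t t' : ℝ} (ht' : 0 ≤ t') (htt' : t' ≤ t) :
    iq K t' ≤ iq K t :=
  sInf_le_sInf fun _ ⟨s, hcard, hunit, hillum⟩ => ⟨s, hcard, hunit, fun x hx =>
    let ⟨r, hr, hxr⟩ := hillum x hx
    ⟨r, hr, hK.add_smul_mem_of_le hx hxr ht' htt'⟩⟩

theorem iq_le_coe_iff_exists_finset (t : ℝ) (m : ℕ) :
    iq K t ≤ m ↔ ∃ s : Finset (EuclideanSpace ℝ (Fin n)), (s.card : ℕ∞) ≤ m ∧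
      (∀ r ∈ s, ‖r‖ = 1) ∧ ∀ x ∈ K, ∃ r ∈ s, x + t • r ∈ K := by
  constructor
  · intro hle
    have hne : {m' : ℕ∞ | ∃ s : Finset (EuclideanSpace ℝ (Fin n)), (s.card : ℕ∞) = m' ∧
        (∀ r ∈ s, ‖r‖ = 1) ∧ ∀ x ∈ K, ∃ r ∈ s, x + t • r ∈ K}.Nonempty := by
      by_contra hempty
      rw [iq, not_nonempty_iff_eq_empty.mp hempty, sInf_empty, top_le_iff] at hle
      exact ENat.natCast_ne_top m hle
    obtain ⟨s, hcard, hunit, hillum⟩ := csInf_mem hne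
    exact ⟨s, hcard.trans_le hle, hunit, hillum⟩
  · rintro ⟨s, hcard, hunit, hillum⟩
    exact (sInf_le ⟨s, rfl, hunit, hillum⟩ : iq K t ≤ _).trans hcard

theorem iq_le_coe_iff (hK : K.Nonempty) (t : ℝ) (m : ℕ) :
    iq K t ≤ m ↔ ∃ v : Fin m → sphere (0 : EuclideanSpace ℝ (Fin n)) 1,
      ∀ x ∈ K, ∃ i, x + t • (v i : EuclideanSpace ℝ (Fin n)) ∈ K := by
  classical
  rw [iq_le_coe_iff_exists_finset]
  constructor
  · rintro ⟨s, hcard, hunit, hillum⟩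
    have hcard_le : s.card ≤ m := by exact_mod_cast hcard
    obtain ⟨x₀, hx₀⟩ := hK
    obtain ⟨r₀, hr₀, -⟩ := hillum x₀ hx₀
    have : Nonempty s := ⟨⟨r₀, hr₀⟩⟩
    -- Pad `s` to an `m`-tuple: `invFun e` takes every value in `s`.
    let e : s → Fin m := Fin.castLE hcard_le ∘ s.equivFin
    have he : e.Injective := (Fin.castLE_injective hcard_le).comp s.equivFin.injective
    let u : Fin m → s := Function.invFun e
    refine ⟨fun i => ⟨u i, mem_sphere_zero_iff_norm.mpr (hunit _ (u i).2)⟩, fun x hx => ?_⟩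
    obtain ⟨r, hr, hxr⟩ := hillum x hx
    have hu : u (e ⟨r, hr⟩) = ⟨r, hr⟩ := Function.leftInverse_invFun he _
    exact ⟨e ⟨r, hr⟩, by simpa [hu] using hxr⟩
  · rintro ⟨v, hv⟩
    refine ⟨Finset.univ.image fun i => (v i : EuclideanSpace ℝ (Fin n)), ?_, by simp,
      fun x hx => ?_⟩
    · exact_mod_cast Finset.card_image_le.trans (Finset.card_fin m).le
    · obtain ⟨i, hi⟩ := hv x hx
      exact ⟨v i, Finset.mem_image_of_mem _ (Finset.mem_univ i), hi⟩

end Illumination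

/-- For every convex body `K ⊆ ℝⁿ`, the function `ε ↦ i(K,ε)` is left-continuous on `(0,∞)`:
for every `ε > 0`, `i(K,ε) = sup {i(K,ε') : 0 < ε' < ε}`. -/
theorem iq_left_continuous {n : ℕ} (K : Set (EuclideanSpace ℝ (Fin n)))
    (hKc : IsCompact K) (hKconv : Convex ℝ K) (hKint : (interior K).Nonempty)
    (ε : ℝ) (hε : 0 < ε) :
    iq K ε = ⨆ ε' ∈ Set.Ioo (0 : ℝ) ε, iq K ε' := by
  have hK : K.Nonempty := hKint.mono interior_subset
  refine le_antisymm ?_ (iSup₂_le fun t ht => iq_le_iq_of_le hKconv ht.1.le ht.2.le)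
  generalize hL : ⨆ ε' ∈ Ioo (0 : ℝ) ε, iq K ε' = L
  induction L using ENat.recTopCoe with
  | top => exact le_top
  | coe m =>
    have hclosed := isClosed_setOf_exists_sphere_illuminating (ι := Fin m) hKc.isClosed
    refine (iq_le_coe_iff hK ε m).mpr
      ((hclosed.closure_subset_iff (s := Ioo 0 ε)).mpr (fun t ht => ?_) ?_)
    · exact (iq_le_coe_iff hK t m).mp (hL ▸ le_iSup₂ (f := fun t _ => iq K t) t ht)
    · rw [closure_Ioo hε.ne]
      exact right_mem_Icc.mpr hε.le
end

section
/- For every convex body K ⊆ ℝⁿ, the function ε ↦ c(K,ε) is right-continuous on (0,∞): for every ε > 0 one has c(K,ε) = inf{ c(K,ε') : ε' > ε } (values in ℕ ∪ {∞}). -/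
open Metric Set
open scoped RealInnerProductSpace

/-- Monotonicity: if a family illuminates at `ε'`, it illuminates at any `0 < ε ≤ ε'`. -/
lemma cq_mono {n : ℕ} (K : Set (EuclideanSpace ℝ (Fin n))) (hKconv : Convex ℝ K)
    {ε ε' : ℝ} (hε : 0 < ε) (hεε' : ε ≤ ε') : cq K ε ≤ cq K ε' := by
  apply sInf_le_sInf
  rintro m ⟨s, hcard, hnorm, hill⟩
  refine ⟨s, hcard, hnorm, fun x hx => ?_⟩
  obtain ⟨r, hr, hmem⟩ := hill x hx
  refine ⟨r, hr, ?_⟩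
  have hε' : 0 < ε' := lt_of_lt_of_le hε hεε'
  set b : ℝ := ε / ε' with hb_def
  have hb0 : 0 < b := div_pos hε hε'
  have hb1 : b ≤ 1 := (div_le_one hε').mpr hεε'
  have hbe : b * ε' = ε := div_mul_cancel₀ ε (ne_of_gt hε')
  have := hKconv.combo_self_interior_mem_interior hx hmem (sub_nonneg.mpr hb1) hb0
    (sub_add_cancel 1 b)
  convert this using 1
  rw [smul_add, ← add_assoc, ← add_smul, sub_add_cancel, one_smul, smul_smul, hbe]

/-- For every convex body `K ⊆ ℝⁿ`, the function `ε ↦ c(K,ε)` is right-continuous on `(0,∞)`: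
for every `ε > 0`, `c(K,ε) = inf {c(K,ε') : ε' > ε}`. -/
theorem cq_right_continuous {n : ℕ} (K : Set (EuclideanSpace ℝ (Fin n)))
    (hKc : IsCompact K) (hKconv : Convex ℝ K) (hKint : (interior K).Nonempty)
    (ε : ℝ) (hε : 0 < ε) :
    cq K ε = ⨅ ε' ∈ Set.Ioi ε, cq K ε' := by
  refine le_antisymm (le_iInf₂ fun ε' hε' => cq_mono K hKconv hε (le_of_lt hε')) ?_
  -- It suffices to show that for each member of the defining set at ε,
  -- some ε' > ε has cq K ε' at most it.
  refine le_sInf ?_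
  rintro m ⟨s, hcard, hnorm, hill⟩
  -- For every x ∈ K pick r and a radius δ.
  have key : ∀ x ∈ K, ∃ δ : ℝ, 0 < δ ∧ ∃ r ∈ s, ∀ y : EuclideanSpace ℝ (Fin n),
      dist y x < δ → ∀ η : ℝ, ε ≤ η → η < ε + δ → y + η • r ∈ interior K := by
    intro x hx
    obtain ⟨r, hr, hmem⟩ := hill x hx
    obtain ⟨δ2, hδ2, hball⟩ := Metric.isOpen_iff.mp isOpen_interior _ hmem
    refine ⟨δ2 / 2, by positivity, r, hr, fun y hy η hη1 hη2 => ?_⟩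
    apply hball
    have h1 : dist (y + η • r) (x + ε • r) ≤ dist y x + dist (η • r) (ε • r) :=
      dist_add_add_le _ _ _ _
    have h2 : dist (η • r) (ε • r) = |η - ε| := by
      rw [dist_eq_norm, ← sub_smul, norm_smul, hnorm r hr, mul_one, Real.norm_eq_abs]
    have h3 : |η - ε| < δ2 / 2 := by
      rw [abs_of_nonneg (sub_nonneg.mpr hη1)]; linarith
    simp only [mem_ball]
    calc dist (y + η • r) (x + ε • r) ≤ dist y x + |η - ε| := by rw [← h2]; exact h1
    _ < δ2 / 2 + δ2 / 2 := by exact add_lt_add hy h3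
    _ = δ2 := by ring
  choose! δ hδ r hrs hprop using key
  -- Cover K by the balls `ball x (δ x)` and extract a finite subcover.
  obtain ⟨t, htK, htcov⟩ := hKc.elim_nhds_subcover (fun x => ball x (δ x))
    (fun x hx => ball_mem_nhds x (hδ x hx))
  by_cases htne : t.Nonempty
  · set δ0 : ℝ := t.inf' htne δ with hδ0_def
    have hδ0 : 0 < δ0 := by
      rw [hδ0_def]
      apply (Finset.lt_inf'_iff htne).mpr
      exact fun x hx => hδ x (htK x hx)
    set ε' : ℝ := ε + δ0 / 2 with hε'_def
    have hε'gt : ε < ε' := by rw [hε'_def]; linarith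
    have : cq K ε' ≤ m := by
      apply sInf_le
      refine ⟨s, hcard, hnorm, fun x hx => ?_⟩
      obtain ⟨x₀, hx₀t, hx₀⟩ := Set.mem_iUnion₂.mp (htcov hx)
      have hx₀K := htK x₀ hx₀t
      refine ⟨r x₀, hrs x₀ hx₀K, ?_⟩
      apply hprop x₀ hx₀K x (mem_ball.mp hx₀) ε' (le_of_lt hε'gt)
      have : δ0 ≤ δ x₀ := Finset.inf'_le δ hx₀t
      rw [hε'_def]; linarith
    calc (⨅ ε'' ∈ Set.Ioi ε, cq K ε'') ≤ cq K ε' := biInf_le _ hε'gt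
    _ ≤ m := this
  ·
    -- still be covered trivially only if K = ∅.
    have hKe : K = ∅ := by
      rw [Finset.not_nonempty_iff_eq_empty] at htne
      subst htne
      simpa using subset_empty_iff.mp (by simpa using htcov)
    obtain ⟨x0, hx0⟩ := hKint
    have hmemK := interior_subset hx0
    rw [hKe] at hmemK
    exact absurd hmemK (Set.notMem_empty _)
end

section
/- For every convex body K ⊆ ℝⁿ, c(K,R(K)) = ∞, i.e., no finite family of unit vectors r_1,…,r_m ∈ S^{n−1} satisfies that every x ∈ K has x + R(K)·r_i ∈ int(K) for some i. -/
open Metric Set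
open scoped RealInnerProductSpace

/-- For every convex body `K ⊆ ℝⁿ` with circumball `B(c,R)`, `c(K,R(K)) = ∞`. -/
theorem cq_at_circumradius_eq_top {n : ℕ} (K : Set (EuclideanSpace ℝ (Fin n)))
    (hKc : IsCompact K) (hKconv : Convex ℝ K) (hKint : (interior K).Nonempty)
    (c : EuclideanSpace ℝ (Fin n)) (R : ℝ) (hcirc : IsCircumball K c R) :
    cq K R = ⊤ := by
  obtain ⟨hsub, hmin⟩ := hcirc
  obtain ⟨x₀, hx₀⟩ := hKint
  have hx₀K : x₀ ∈ K := interior_subset hx₀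
  have hKne : K.Nonempty := ⟨x₀, hx₀K⟩
  have hR0 : 0 ≤ R := by
    have h1 := mem_closedBall.mp (hsub hx₀K)
    linarith [dist_nonneg (x := x₀) (y := c)]
  -- the circumcenter belongs to K
  have hcK : c ∈ K := by
    by_contra hc
    obtain ⟨p, hpK, hproj⟩ :=
      exists_norm_eq_iInf_of_complete_convex hKne (hKc.isClosed.isComplete) hKconv c
    have hineq := (norm_eq_iInf_iff_real_inner_le_zero hKconv hpK).mp hproj
    have hpc : p ≠ c := fun h => hc (h ▸ hpK)
    set d : ℝ := ‖p - c‖ with hd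
    have hdpos : 0 < d := by
      rw [hd, norm_pos_iff]
      exact sub_ne_zero.mpr hpc
    set c' : EuclideanSpace ℝ (Fin n) := c + (1/2 : ℝ) • (p - c) with hc'
    have key : ∀ x ∈ K, ‖x - c'‖ ^ 2 ≤ R ^ 2 - (3/4) * d ^ 2 := by
      intro x hx
      have hip : d ^ 2 ≤ ⟪x - c, p - c⟫ := by
        have h1 : ⟪c - p, x - p⟫ ≤ 0 := hineq x hx
        have h2 : ⟪x - c, p - c⟫ + ⟪c - p, x - p⟫ = ‖p - c‖ ^ 2 := by
          rw [← real_inner_self_eq_norm_sq]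
          simp only [inner_sub_left, inner_sub_right]
          rw [real_inner_comm c x, real_inner_comm p x, real_inner_comm p c]
          ring
        have hdd : d ^ 2 = ‖p - c‖ ^ 2 := by rw [hd]
        linarith
      have hxc : x - c' = (x - c) - (1/2 : ℝ) • (p - c) := by
        rw [hc']; abel
      have hxR : ‖x - c‖ ≤ R := by
        have := mem_closedBall.mp (hsub hx)
        rwa [dist_eq_norm] at this
      have hexp : ‖x - c'‖ ^ 2
          = ‖x - c‖ ^ 2 - ⟪x - c, p - c⟫ + (1/4) * d ^ 2 := by
        rw [hxc, norm_sub_sq_real, real_inner_smul_right, norm_smul]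
        simp [norm_norm]
        ring
      have hsq : ‖x - c‖ ^ 2 ≤ R ^ 2 := by
        have := sq_le_sq' (by linarith [norm_nonneg (x - c)]) hxR
        simpa using this
      rw [hexp]; linarith
    have harg : 0 ≤ R ^ 2 - (3/4) * d ^ 2 := by
      have := key x₀ hx₀K
      have h0 : (0:ℝ) ≤ ‖x₀ - c'‖ ^ 2 := sq_nonneg _
      linarith
    set R' : ℝ := Real.sqrt (R ^ 2 - (3/4) * d ^ 2) with hR'
    have hsub' : K ⊆ closedBall c' R' := by
      intro x hx
      rw [mem_closedBall, dist_eq_norm, hR']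
      exact Real.le_sqrt_of_sq_le (key x hx)
    have hlt : R' < R := by
      rw [hR']
      have : R ^ 2 - (3/4) * d ^ 2 < R ^ 2 := by nlinarith
      calc Real.sqrt (R ^ 2 - (3/4) * d ^ 2) < Real.sqrt (R ^ 2) :=
            Real.sqrt_lt_sqrt harg this
        _ = R := by rw [Real.sqrt_sq hR0]
    exact absurd (hmin c' R' hsub') (not_le.mpr hlt)
  -- now show the defining set of cq is empty
  have hempty : {m : ℕ∞ | ∃ s : Finset (EuclideanSpace ℝ (Fin n)), (s.card : ℕ∞) = m ∧
      (∀ r ∈ s, ‖r‖ = 1) ∧ ∀ x ∈ K, ∃ r ∈ s, x + R • r ∈ interior K} = ∅ := by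
    rw [eq_empty_iff_forall_notMem]
    rintro m ⟨s, -, hunit, hcov⟩
    obtain ⟨r, hrs, hr⟩ := hcov c hcK
    have hr1 : ‖r‖ = 1 := hunit r hrs
    rcases eq_or_lt_of_le hR0 with hR | hR
    · -- R = 0
      have hcint : c ∈ interior K := by
        simpa [← hR] using hr
      obtain ⟨ε, hε, hball⟩ := Metric.isOpen_iff.mp isOpen_interior c hcint
      have hmem : c + (ε/2) • r ∈ ball c ε := by
        rw [mem_ball, dist_eq_norm, add_sub_cancel_left, norm_smul, hr1, mul_one,
          Real.norm_eq_abs, abs_of_pos (by linarith : (0:ℝ) < ε/2)]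
        linarith
      have hsubK : c + (ε/2) • r ∈ K := interior_subset (hball hmem)
      have hCB : c + (ε/2) • r ∈ closedBall c R := hsub hsubK
      rw [mem_closedBall, dist_eq_norm, add_sub_cancel_left, norm_smul, hr1, mul_one,
        Real.norm_eq_abs, ← hR, abs_of_pos (by linarith : (0:ℝ) < ε/2)] at hCB
      linarith
    · -- R > 0
      have hint : interior K ⊆ ball c R := by
        have h1 : interior K ⊆ interior (closedBall c R) :=
          interior_mono hsub
        rwa [interior_closedBall c (ne_of_gt hR)] at h1
      have := hint hr
      rw [mem_ball, dist_eq_norm] at this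
      simp [norm_smul, hr1, abs_of_pos hR] at this
  rw [cq, hempty, sInf_empty]
end

section
/- Let K ⊆ ℝⁿ be a convex body such that the origin o belongs to the boundary bd(K). Then there exists x_0 ∈ int(K) such that ⟨x, x_0⟩ ≥ 0 for all x ∈ K, where ⟨·,·⟩ is the standard inner product on ℝⁿ. -/
open Metric Set
open scoped RealInnerProductSpace

/-- Lemma 4.1: if the origin belongs to the boundary of a convex body `K ⊆ ℝⁿ`, then there is
`x₀ ∈ int K` with `⟨x, x₀⟩ ≥ 0` for all `x ∈ K`. -/
theorem exists_interior_point_nonneg_inner {n : ℕ} (K : Set (EuclideanSpace ℝ (Fin n)))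
    (hKc : IsCompact K) (hKconv : Convex ℝ K) (hKint : (interior K).Nonempty)
    (ho : (0 : EuclideanSpace ℝ (Fin n)) ∈ frontier K) :
    ∃ x₀ ∈ interior K, ∀ x ∈ K, 0 ≤ ⟪x, x₀⟫ := by
  classical
  set T : Set (EuclideanSpace ℝ (Fin n)) := {u | ∀ x ∈ K, 0 ≤ ⟪x, u⟫} with hT
  by_contra hcon
  push_neg at hcon
  have hdisj : Disjoint (interior K) T := by
    rw [Set.disjoint_left]
    intro a ha haT
    obtain ⟨x, hx, hlt⟩ := hcon a ha
    exact absurd (haT x hx) (not_le.2 hlt)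
  have hTconv : Convex ℝ T := by
    intro u hu v hv a b ha hb hab x hx
    rw [inner_add_right, inner_smul_right, inner_smul_right]
    have h1 := hu x hx
    have h2 := hv x hx
    positivity
  obtain ⟨f, c, hf₁, hf₂⟩ := geometric_hahn_banach_open hKconv.interior isOpen_interior
    hTconv hdisj
  have h0T : (0 : EuclideanSpace ℝ (Fin n)) ∈ T := by intro x hx; simp
  have hc0 : c ≤ 0 := by simpa using hf₂ 0 h0T
  -- `f` is nonnegative on the cone `T`
  have hfT : ∀ u ∈ T, 0 ≤ f u := by
    intro u hu
    by_contra hneg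
    push_neg at hneg
    set l : ℝ := (c - 1) / f u with hl
    have hlpos : 0 < l := div_pos_iff.2 (Or.inr ⟨by linarith, hneg⟩)
    have hlu : l • u ∈ T := by
      intro x hx
      rw [inner_smul_right]
      have := hu x hx
      positivity
    have h := hf₂ _ hlu
    rw [map_smul, smul_eq_mul, hl, div_mul_cancel₀ _ (ne_of_lt hneg)] at h
    linarith
  -- `f` is nonpositive on `K`
  obtain ⟨y, hy⟩ := hKint
  have hfy : f y < 0 := lt_of_lt_of_le (hf₁ y hy) hc0
  have hfK : ∀ x ∈ K, f x ≤ 0 := by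
    intro x hx
    by_contra hpos
    push_neg at hpos
    set d : ℝ := f x - f y with hd
    have hdpos : 0 < d := by rw [hd]; linarith
    set b : ℝ := f x / (2 * d) with hb
    have hbpos : 0 < b := by positivity
    have hble : b ≤ 1 := by
      rw [hb, div_le_one (by positivity)]
      linarith
    have hmem : (1 - b) • x + b • y ∈ interior K :=
      hKconv.combo_self_interior_mem_interior hx hy (by linarith) hbpos (by ring)
    have h := hf₁ _ hmem
    rw [map_add, map_smul, map_smul, smul_eq_mul, smul_eq_mul] at h
    have hval : (1 - b) * f x + b * f y = f x - b * d := by rw [hd]; ring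
    have : f x - b * d < c := by linarith [h, hval.symm ▸ h]
    have hbd : b * d = f x / 2 := by
      rw [hb]; field_simp
    rw [hbd] at this
    linarith
  -- Riesz representation of `f`
  set v : EuclideanSpace ℝ (Fin n) :=
    (InnerProductSpace.toDual ℝ (EuclideanSpace ℝ (Fin n))).symm f with hv
  have hfv : ∀ x : EuclideanSpace ℝ (Fin n), f x = ⟪v, x⟫ := by
    intro x
    rw [hv, InnerProductSpace.toDual_symm_apply]
  have hvT : -v ∈ T := by
    intro x hx
    have h := hfK x hx
    rw [hfv x, real_inner_comm] at h
    rw [inner_neg_right]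
    linarith
  have hvv : (0:ℝ) ≤ f (-v) := hfT _ hvT
  rw [hfv, inner_neg_right, real_inner_self_eq_norm_sq] at hvv
  have hv0 : v = 0 := by
    have : ‖v‖ = 0 := by nlinarith [sq_nonneg ‖v‖, norm_nonneg v]
    simpa using this
  have := hfy
  rw [hfv, hv0] at this
  simp at this
end

section
/- Let K ⊆ ℝⁿ be a convex body whose circumcenter c_K does not belong to int(K). Then for every δ > 0, the set K ∩ B°(c_K,δ) is not contained in ⋃_{x ∈ K ∩ bd(B(c_K,R(K)))} (K + (c_K − x)). -/
open Metric Set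
open scoped RealInnerProductSpace

/-!
The circumcenter `c` of a compact convex set `K` lies in `K`: otherwise the nearest point of `K`
to `c` would be the center of a strictly smaller ball containing `K`. A point `z` of the
translate `K + (c - x)`, with `‖x - c‖ = R`, lies in `closedBall (2c - x) R`, which forces
`⟪z - c, x - c⟫ < 0` as soon as `z ≠ c`. On the other hand, the convex set `D` of points `y`
with `⟪x - c, y - c⟫ ≥ 0` for all `x ∈ K` meets `interior K`: if a functional `f` separated them,
its Riesz vector `w` would satisfy `c - w ∈ D` and `f (-w) ≥ 0`, so `w = 0`. When
`c ∉ interior K` such a `y` differs from `c`, and moving from `c` towards `y` gives points of `K`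
arbitrarily close to `c` that lie in none of the translates.
-/

section InnerProductSpace

variable {E : Type*} [NormedAddCommGroup E] [InnerProductSpace ℝ E]

theorem IsCompact.exists_closedBall_radius_lt_of_center_notMem {K : Set E} (hKc : IsCompact K)
    (hKconv : Convex ℝ K) (hne : K.Nonempty) {c : E} {R : ℝ} (hKR : K ⊆ closedBall c R)
    (hc : c ∉ K) : ∃ c' R', K ⊆ closedBall c' R' ∧ R' < R := by
  obtain ⟨v, hvK, hv⟩ := exists_norm_eq_iInf_of_complete_convex hne hKc.isComplete hKconv c
  rw [norm_eq_iInf_iff_real_inner_le_zero hKconv hvK] at hv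
  have hd : 0 < ‖c - v‖ := norm_pos_iff.2 (sub_ne_zero.2 fun h => hc (h ▸ hvK))
  have hdR : ‖c - v‖ ≤ R := by simpa [dist_eq_norm'] using hKR hvK
  have hdist : ∀ x ∈ K, ‖x - v‖ ^ 2 ≤ R ^ 2 - ‖c - v‖ ^ 2 := by
    intro x hx
    have hxR : ‖x - c‖ ≤ R := by simpa [dist_eq_norm] using hKR hx
    have hexp := norm_sub_sq_real (x - v) (c - v)
    rw [sub_sub_sub_cancel_right] at hexp
    have hinner : ⟪x - v, c - v⟫ ≤ 0 := real_inner_comm (x - v) (c - v) ▸ hv x hx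
    nlinarith [norm_nonneg (x - c)]
  refine ⟨v, √(R ^ 2 - ‖c - v‖ ^ 2), fun x hx => ?_, ?_⟩
  · rw [mem_closedBall, dist_eq_norm]
    exact (Real.le_sqrt (norm_nonneg _) (by nlinarith [hdist x hx, sq_nonneg ‖x - v‖])).2
      (hdist x hx)
  · rw [Real.sqrt_lt' (hd.trans_le hdR)]
    nlinarith

theorem inner_sub_neg_of_mem_translate {K : Set E} {c x z : E} {R : ℝ}
    (hKR : K ⊆ closedBall c R) (hx : x ∈ sphere c R) (hz : z ∈ (· + (c - x)) '' K)
    (hzc : z ≠ c) : ⟪z - c, x - c⟫ < 0 := by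
  obtain ⟨k, hk, hkz⟩ := hz
  have hkR : ‖k - c‖ ≤ R := by simpa [dist_eq_norm] using hKR hk
  have hxR : ‖x - c‖ = R := by simpa [dist_eq_norm] using hx
  have hk_eq : k - c = z - c + (x - c) := by rw [← hkz]; dsimp only; abel
  have hexp := norm_add_sq_real (z - c) (x - c)
  rw [← hk_eq, hxR] at hexp
  have hpos : 0 < ‖z - c‖ := norm_pos_iff.2 (sub_ne_zero.2 hzc)
  nlinarith [norm_nonneg (k - c)]

theorem Convex.exists_pos_add_smul_sub_mem_inter_ball {K : Set E} (hK : Convex ℝ K) {c y : E}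
    (hc : c ∈ K) (hy : y ∈ K) {δ : ℝ} (hδ : 0 < δ) :
    ∃ t : ℝ, 0 < t ∧ c + t • (y - c) ∈ K ∩ ball c δ := by
  have hsum : 0 < ‖y - c‖ + δ := by positivity
  refine ⟨δ / (‖y - c‖ + δ), by positivity, hK.add_smul_sub_mem hc hy ⟨by positivity, ?_⟩, ?_⟩
  · rw [div_le_one hsum]; linarith [norm_nonneg (y - c)]
  · rw [mem_ball, dist_eq_norm, add_sub_cancel_left, norm_smul, Real.norm_of_nonneg (by positivity),
      div_mul_eq_mul_div, div_lt_iff₀ hsum]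
    nlinarith

theorem Convex.exists_mem_interior_inner_sub_nonneg [CompleteSpace E] {K : Set E}
    (hK : Convex ℝ K) (hKint : (interior K).Nonempty) (c : E) :
    ∃ y ∈ interior K, ∀ x ∈ K, 0 ≤ ⟪x - c, y - c⟫ := by
  by_contra! hdisj
  set D : Set E := {y | ∀ x ∈ K, 0 ≤ ⟪x - c, y - c⟫}
  have hcD : c ∈ D := by simp [D]
  have hray : ∀ y ∈ D, ∀ t : ℝ, 0 ≤ t → c + t • (y - c) ∈ D := fun y hy t ht x hx => by
    rw [add_sub_cancel_left, real_inner_smul_right]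
    exact mul_nonneg ht (hy x hx)
  have hDconv : Convex ℝ D := fun y hy z hz a b ha hb hab x hx => by
    have : a • y + b • z - c = a • (y - c) + b • (z - c) := by
      conv_lhs => rw [← one_smul ℝ c, ← hab, add_smul]
      rw [smul_sub, smul_sub]
      abel
    rw [this, inner_add_right, real_inner_smul_right, real_inner_smul_right]
    exact add_nonneg (mul_nonneg ha (hy x hx)) (mul_nonneg hb (hz x hx))
  have hKD : Disjoint (interior K) D :=
    Set.disjoint_left.2 fun y hy hyD => by
      obtain ⟨x, hx, hneg⟩ := hdisj y hy
      exact (hyD x hx).not_gt hneg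
  obtain ⟨f, u, hf, hfK, hfD⟩ :=
    geometric_hahn_banach_of_nonempty_interior hK hDconv hKD hKint ⟨c, hcD⟩
  -- `f` is bounded below on every ray of `D` issuing from `c`
  have hfD_nonneg : ∀ y ∈ D, 0 ≤ f (y - c) := by
    intro y hy
    by_contra! hneg
    have hu : u ≤ f c := hfD c hcD
    have := hfD _ (hray y hy ((f c - u + 1) / -f (y - c)) (by bound))
    rw [map_add, map_smul, smul_eq_mul, div_mul_eq_mul_div, div_neg, mul_div_cancel_right₀ _
      hneg.ne] at this
    linarith
  set w := (InnerProductSpace.toDual ℝ E).symm f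
  have hfw : ∀ v, ⟪w, v⟫ = f v := fun v => InnerProductSpace.toDual_symm_apply
  have hwD : c - w ∈ D := fun x hx => by
    rw [sub_sub_cancel_left, inner_neg_right, real_inner_comm, hfw, map_sub, neg_nonneg,
      sub_nonpos]
    exact (hfK x hx).trans (hfD c hcD)
  have hw : w = 0 := by
    have := hfD_nonneg _ hwD
    rw [sub_sub_cancel_left, ← hfw, inner_neg_right, neg_nonneg] at this
    exact real_inner_self_nonpos.1 this
  exact hf (by simpa [w] using congrArg (InnerProductSpace.toDual ℝ E) hw)

end InnerProductSpace

theorem IsCircumball.center_mem {n : ℕ} {K : Set (EuclideanSpace ℝ (Fin n))}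
    {c : EuclideanSpace ℝ (Fin n)} {R : ℝ} (hcirc : IsCircumball K c R) (hKc : IsCompact K)
    (hKconv : Convex ℝ K) (hne : K.Nonempty) : c ∈ K := by
  by_contra hc
  obtain ⟨c', R', hK, hR'⟩ := hKc.exists_closedBall_radius_lt_of_center_notMem hKconv hne hcirc.1 hc
  exact (hcirc.2 c' R' hK).not_gt hR'

/-- Lemma 4.2: if the circumcenter `c` of a convex body `K ⊆ ℝⁿ` is not interior to `K`, then
for every `δ > 0` the set `K ∩ B°(c,δ)` is not covered by the translates `K + (c - x)`,
`x ∈ K ∩ bd B(c,R)`. -/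
theorem circumcenter_not_interior_no_cover {n : ℕ} (K : Set (EuclideanSpace ℝ (Fin n)))
    (hKc : IsCompact K) (hKconv : Convex ℝ K) (hKint : (interior K).Nonempty)
    (c : EuclideanSpace ℝ (Fin n)) (R : ℝ) (hcirc : IsCircumball K c R)
    (hc : c ∉ interior K) :
    ∀ δ : ℝ, 0 < δ →
      ¬ (K ∩ ball c δ ⊆ ⋃ x ∈ K ∩ sphere c R, (· + (c - x)) '' K) := by
  intro δ hδ hcover
  have hcK : c ∈ K := hcirc.center_mem hKc hKconv (hKint.mono interior_subset)
  obtain ⟨y, hy, hyK⟩ := hKconv.exists_mem_interior_inner_sub_nonneg hKint c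
  obtain ⟨t, ht, hz⟩ := hKconv.exists_pos_add_smul_sub_mem_inter_ball hcK (interior_subset hy) hδ
  have hyc : y ≠ c := fun h => hc (h ▸ hy)
  have hzc : c + t • (y - c) ≠ c := by simpa [sub_eq_zero] using And.intro ht.ne' hyc
  obtain ⟨x, hx, hzx⟩ : ∃ x ∈ K ∩ sphere c R, c + t • (y - c) ∈ (· + (c - x)) '' K := by
    simpa using hcover hz
  have hneg := inner_sub_neg_of_mem_translate hcirc.1 hx.2 hzx hzc
  rw [add_sub_cancel_left, real_inner_smul_left, real_inner_comm] at hneg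
  nlinarith [hyK x hx.1]
end

section
/- Let K ⊆ ℝⁿ be a convex body for which there exist finitely many points x_1,…,x_k ∈ K ∩ bd(B(c_K,R(K))) and δ > 0 with B°(c_K,δ) ⊆ ⋃_{i=1}^k (K + (c_K − x_i)). Then: (α) for every u ∈ ℝⁿ∖{o} the open half-sphere {x ∈ bd(B(c_K,R(K))) : ⟨x − c_K, u⟩ < 0} contains a point of K; (β) c_K ∈ int(K); (γ) the affine hull of K ∩ bd(B(c_K,R(K))) is all of ℝⁿ; (δ) K ∩ bd(B(c_K,R(K))) contains at least n+1 points. -/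
open Metric Set
open scoped RealInnerProductSpace

/-- Corollary 4.1: if finitely many translates `K + (c - x_i)`, `x_i ∈ K ∩ bd B(c,R)`, of a
convex body `K` cover a neighborhood of its circumcenter `c`, then
(α) every open half-sphere of `bd B(c,R)` meets `K`; (β) `c ∈ int K`;
(γ) the affine hull of `K ∩ bd B(c,R)` is all of `ℝⁿ`;
(δ) `K ∩ bd B(c,R)` contains at least `n + 1` points. -/
theorem necessary_conditions_of_cover {n : ℕ} (K : Set (EuclideanSpace ℝ (Fin n)))
    (hKc : IsCompact K) (hKconv : Convex ℝ K) (hKint : (interior K).Nonempty)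
    (c : EuclideanSpace ℝ (Fin n)) (R : ℝ) (hcirc : IsCircumball K c R)
    (k : ℕ) (x : Fin k → EuclideanSpace ℝ (Fin n)) (hx : ∀ i, x i ∈ K ∩ sphere c R)
    (δ : ℝ) (hδ : 0 < δ) (hcov : ball c δ ⊆ ⋃ i, (· + (c - x i)) '' K) :
    (∀ u : EuclideanSpace ℝ (Fin n), u ≠ 0 → ∃ y ∈ K, y ∈ sphere c R ∧ ⟪y - c, u⟫ < 0) ∧
    c ∈ interior K ∧
    affineSpan ℝ (K ∩ sphere c R) = ⊤ ∧
    (∃ s : Finset (EuclideanSpace ℝ (Fin n)), ↑s ⊆ K ∩ sphere c R ∧ n + 1 ≤ s.card) := by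
  have halpha : ∀ u : EuclideanSpace ℝ (Fin n), u ≠ 0 →
      ∃ y ∈ K, y ∈ sphere c R ∧ ⟪y - c, u⟫ < 0 := by
    intro u hu
    have hun : (0:ℝ) < ‖u‖ := norm_pos_iff.2 hu
    set t : ℝ := δ / (2 * ‖u‖) with ht
    have ht0 : 0 < t := by positivity
    have hz : c + t • u ∈ ball c δ := by
      rw [mem_ball, dist_eq_norm, add_sub_cancel_left, norm_smul, Real.norm_eq_abs,
        abs_of_pos ht0, ht, div_mul_eq_mul_div, div_lt_iff₀ (by positivity)]
      nlinarith
    have hmem := hcov hz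
    simp only [mem_iUnion, mem_image] at hmem
    obtain ⟨i, p, hpK, hpe⟩ := hmem
    have hp : p = x i + t • u := by
      have h1 : p = c + t • u - (c - x i) := by rw [← hpe]; abel
      rw [h1]; abel
    rw [hp] at hpK
    have hball := hcirc.1 hpK
    rw [mem_closedBall, dist_eq_norm] at hball
    have hxi : ‖x i - c‖ = R := by
      have h2 := (hx i).2; rwa [mem_sphere, dist_eq_norm] at h2
    have hnorm : ‖(x i - c) + t • u‖ ≤ R := by
      have h3 : x i + t • u - c = (x i - c) + t • u := by abel
      rwa [h3] at hball
    have hR : 0 ≤ R := hxi ▸ norm_nonneg _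
    have hsq : ‖(x i - c) + t • u‖ ^ 2 ≤ R ^ 2 := by
      nlinarith [norm_nonneg ((x i - c) + t • u)]
    rw [norm_add_sq_real, hxi, real_inner_smul_right, norm_smul, Real.norm_eq_abs,
      abs_of_pos ht0, mul_pow] at hsq
    refine ⟨x i, (hx i).1, (hx i).2, ?_⟩
    nlinarith [mul_pos (mul_pos ht0 ht0) (mul_pos hun hun)]
  have hbeta : c ∈ interior K := by
    by_contra hc
    obtain ⟨f, hf⟩ := geometric_hahn_banach_open_point hKconv.interior isOpen_interior hc
    obtain ⟨a, ha⟩ := hKint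
    set u := (InnerProductSpace.toDual ℝ (EuclideanSpace ℝ (Fin n))).symm f with hudef
    have hfu : ∀ y, ⟪u, y⟫ = f y := fun y => InnerProductSpace.toDual_symm_apply
    have hu : u ≠ 0 := by
      intro h0
      have h1 := hfu a; have h2 := hfu c
      rw [h0, inner_zero_left] at h1 h2
      have h3 := hf a ha
      rw [← h1, ← h2] at h3
      exact lt_irrefl _ h3
    obtain ⟨y, hyK, _, hyin⟩ := halpha (-u) (neg_ne_zero.2 hu)
    rw [inner_neg_right, neg_lt, neg_zero] at hyin
    -- hyin : 0 < ⟪y - c, u⟫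
    have hfyc : f y ≤ f c := by
      by_contra hgt
      push_neg at hgt
      have hfa : f a < f c := hf a ha
      have hd : 0 < f y - f a := by linarith
      set r : ℝ := (f c - f a) / (f y - f a) with hr
      have hr0 : 0 < r := div_pos (by linarith) hd
      have hr1 : r < 1 := (div_lt_one hd).2 (by linarith)
      set θ : ℝ := (r + 1) / 2 with hθ
      have hθ0 : 0 < θ := by positivity
      have hθ1 : θ < 1 := by rw [hθ]; linarith
      have hmemi : (1 - θ) • a + θ • y ∈ interior K :=
        hKconv.combo_interior_closure_mem_interior ha (subset_closure hyK)
          (by linarith) hθ0.le (by ring)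
      have h4 := hf _ hmemi
      rw [map_add, map_smul, map_smul, smul_eq_mul, smul_eq_mul] at h4
      have h5 : r * (f y - f a) = f c - f a := div_mul_cancel₀ _ hd.ne'
      nlinarith
    have h6 : ⟪y - c, u⟫ = f y - f c := by
      rw [real_inner_comm, inner_sub_right, hfu y, hfu c]
    rw [h6] at hyin; linarith
  have hne : (K ∩ sphere c R).Nonempty := by
    have hcball : c ∈ ball c δ := mem_ball_self hδ
    have hmem := hcov hcball
    simp only [mem_iUnion, mem_image] at hmem
    obtain ⟨i, -, -, -⟩ := hmem
    exact ⟨x i, hx i⟩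
  have hgamma : affineSpan ℝ (K ∩ sphere c R) = ⊤ := by
    by_contra hsp
    rw [AffineSubspace.affineSpan_eq_top_iff_vectorSpan_eq_top_of_nonempty ℝ _ _ hne] at hsp
    have hV : (vectorSpan ℝ (K ∩ sphere c R))ᗮ ≠ ⊥ := by
      simpa [Submodule.orthogonal_eq_bot_iff] using hsp
    obtain ⟨u, huV, hu⟩ := Submodule.exists_mem_ne_zero_of_ne_bot hV
    obtain ⟨y, hyK, hyS, hyin⟩ := halpha u hu
    obtain ⟨y', hyK', hyS', hyin'⟩ := halpha (-u) (neg_ne_zero.2 hu)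
    rw [inner_neg_right, neg_lt, neg_zero] at hyin'
    have hmemV : y -ᵥ y' ∈ vectorSpan ℝ (K ∩ sphere c R) :=
      vsub_mem_vectorSpan ℝ ⟨hyK, hyS⟩ ⟨hyK', hyS'⟩
    have h0 : ⟪y - y', u⟫ = 0 := by
      have := (Submodule.mem_orthogonal _ u).mp huV _ hmemV
      rwa [vsub_eq_sub] at this
    have h1 : (y - c) - (y' - c) = y - y' := by abel
    rw [← h1, inner_sub_left] at h0
    linarith
  refine ⟨halpha, hbeta, hgamma, ?_⟩
  obtain ⟨t, hts, htspan, htind⟩ :=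
    exists_affineIndependent ℝ (EuclideanSpace ℝ (Fin n)) (K ∩ sphere c R)
  rw [hgamma] at htspan
  have htfin : t.Finite := finite_set_of_fin_dim_affineIndependent ℝ htind
  haveI : Fintype t := htfin.fintype
  refine ⟨t.toFinset, by simpa using hts, ?_⟩
  rw [Set.toFinset_card]
  have hcard := htind.affineSpan_eq_top_iff_card_eq_finrank_add_one.mp
    (by rwa [Subtype.range_coe])
  rw [hcard, finrank_euclideanSpace_fin]
end

section
/- For n ≥ 3, let K ⊆ ℝⁿ be the compact double cone K = {x ∈ ℝⁿ : ‖(x_1,…,x_{n−1})‖ + |x_n| ≤ 1} (the convex hull of the points (0,…,0,±1) and the set {(ξ_1,…,ξ_{n−1},0) : ξ_1² + ⋯ + ξ_{n−1}² = 1}). Then its circumball is B(o,1), K ⊆ ⋃_{x ∈ K ∩ S^{n−1}} (K − x), yet for every finite set {x_1,…,x_k} ⊆ K ∩ S^{n−1} and every δ > 0, B°(o,δ) is not contained in ⋃_{i=1}^k (K − x_i). -/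
open Metric Set
open scoped RealInnerProductSpace

open Filter Topology

/-! Write points as `u + t • e` with `u ⟂ e`, so that the double cone is `‖u‖ + |t| ≤ 1` and its
unit vectors are the apices `±e` and the equator `t = 0, ‖u‖ = 1`. A point of the cone is pushed
back into the cone by an apex when `‖u‖ ≤ |t|` and by an equator point otherwise. Given finitely
many unit vectors `xᵢ` of the cone, the equator is infinite (its plane has dimension at least two),
so it contains a `v` with `v ≠ -xᵢ`; then `-⟪v, xᵢ⟫ < γ` for some `γ < 1`, and the points
`s • (v + γ • e)`, `s > 0`, arbitrarily close to the origin, lie in no `K - xᵢ`. -/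

theorem norm_le_of_mem_closedBall_of_neg_mem {F : Type*} [SeminormedAddCommGroup F]
    [NormedSpace ℝ F] {a c : F} {r : ℝ} (ha : a ∈ closedBall c r) (hna : -a ∈ closedBall c r) :
    ‖a‖ ≤ r := by
  rw [mem_closedBall, dist_eq_norm] at ha hna
  have : ‖a - -a‖ ≤ ‖a - c‖ + ‖-a - c‖ := by
    simpa [norm_sub_rev (-a) c] using norm_sub_le_norm_sub_add_norm_sub a c (-a)
  rw [sub_neg_eq_add, ← two_smul ℝ a, norm_smul] at this
  norm_num at this
  linarith

section

variable {E : Type*} [NormedAddCommGroup E] [InnerProductSpace ℝ E] {e u v x : E} {s t : ℝ}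

theorem neg_one_lt_inner_of_ne_neg (hv1 : ‖v‖ = 1) (hx1 : ‖x‖ = 1) (h : v ≠ -x) : -1 < ⟪v, x⟫ :=
  (neg_one_le_real_inner_of_norm_eq_one hv1 hx1).lt_of_ne
    fun h' => h ((inner_eq_neg_one_iff_of_norm_eq_one hv1 hx1).mp h'.symm)

theorem exists_pos_lt_one_forall_lt {ι : Type*} [Finite ι] {f : ι → ℝ} (hf : ∀ i, f i < 1) :
    ∃ γ, 0 < γ ∧ γ < 1 ∧ ∀ i, f i < γ :=
  ((eventually_nhdsWithin_of_eventually_nhds (eventually_gt_nhds one_pos)).and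
    (eventually_mem_nhdsWithin.and (Filter.eventually_all.2 fun i =>
      eventually_nhdsWithin_of_eventually_nhds (eventually_gt_nhds (hf i))))).exists
      (f := 𝓝[<] (1 : ℝ))

theorem infinite_sphere_of_one_lt_rank {F : Type*} [NormedAddCommGroup F] [NormedSpace ℝ F]
    (h : 1 < Module.rank ℝ F) : (sphere (0 : F) 1).Infinite := by
  have : Nontrivial F := rank_pos_iff_nontrivial.mp (zero_lt_one.trans h)
  obtain ⟨v, hv⟩ := exists_norm_eq F zero_le_one
  refine (isConnected_sphere h 0 zero_le_one).isPreconnected.infinite_of_nontrivial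
    ⟨v, by simpa using hv, -v, by simpa using hv, fun hvv => ?_⟩
  have : (2 : ℝ) • v = 0 := by rw [two_smul]; exact eq_neg_iff_add_eq_zero.mp hvv
  simp [smul_eq_zero.mp this |>.resolve_left two_ne_zero] at hv

theorem infinite_setOf_inner_eq_zero_norm_eq_one (he : e ≠ 0) (hE : 2 < Module.finrank ℝ E) :
    {v : E | ⟪e, v⟫ = 0 ∧ ‖v‖ = 1}.Infinite := by
  have : FiniteDimensional ℝ E := Module.finite_of_finrank_pos (by omega)
  have hW : Module.finrank ℝ (ℝ ∙ e)ᗮ + 1 = Module.finrank ℝ E := by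
    rw [← (ℝ ∙ e).finrank_add_finrank_orthogonal, finrank_span_singleton he, add_comm]
  have hrank : 1 < Module.rank ℝ (ℝ ∙ e)ᗮ := by
    rw [← Module.finrank_eq_rank]
    exact_mod_cast (by omega : 1 < Module.finrank ℝ (ℝ ∙ e)ᗮ)
  refine ((infinite_sphere_of_one_lt_rank hrank).image Subtype.val_injective.injOn).mono ?_
  rintro _ ⟨w, hw, rfl⟩
  exact ⟨Submodule.mem_orthogonal_singleton_iff_inner_right.mp w.2, by simpa using hw⟩

/-- The double cone with axis the unit vector `e`: the convex hull of `±e` and of the unit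
sphere of `eᗮ`. -/
def doubleCone (e : E) : Set E := {x | ‖x - ⟪e, x⟫ • e‖ + |⟪e, x⟫| ≤ 1}

theorem exists_inner_eq_zero_eq_add_smul (he : ‖e‖ = 1) (x : E) :
    ∃ (u : E) (t : ℝ), ⟪e, u⟫ = 0 ∧ x = u + t • e := by
  refine ⟨x - ⟪e, x⟫ • e, ⟪e, x⟫, ?_, (sub_add_cancel _ _).symm⟩
  rw [inner_sub_right, inner_smul_right, real_inner_self_eq_norm_sq, he]
  ring

theorem mem_doubleCone_add_smul (he : ‖e‖ = 1) (hu : ⟪e, u⟫ = 0) :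
    u + t • e ∈ doubleCone e ↔ ‖u‖ + |t| ≤ 1 := by
  have : ⟪e, u + t • e⟫ = t := by
    rw [inner_add_right, inner_smul_right, real_inner_self_eq_norm_sq, he, hu]
    ring
  simp [doubleCone, this]

theorem norm_add_smul_sq_of_inner_eq_zero (he : ‖e‖ = 1) (hu : ⟪e, u⟫ = 0) :
    ‖u + t • e‖ ^ 2 = ‖u‖ ^ 2 + t ^ 2 := by
  rw [norm_add_sq_real, inner_smul_right, real_inner_comm, hu, norm_smul, he, Real.norm_eq_abs]
  simp

theorem doubleCone_subset_closedBall (he : ‖e‖ = 1) : doubleCone e ⊆ closedBall 0 1 := by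
  intro x hx
  obtain ⟨u, t, hu, rfl⟩ := exists_inner_eq_zero_eq_add_smul he x
  rw [mem_doubleCone_add_smul he hu] at hx
  have hsq : ‖u + t • e‖ ^ 2 ≤ 1 := by
    rw [norm_add_smul_sq_of_inner_eq_zero he hu, ← sq_abs t]
    nlinarith [norm_nonneg u, abs_nonneg t]
  simpa using (sq_le_one_iff₀ (norm_nonneg _)).mp hsq

theorem smul_mem_doubleCone (he : ‖e‖ = 1) (ht : |t| ≤ 1) : t • e ∈ doubleCone e := by
  simpa using (mem_doubleCone_add_smul (u := 0) (t := t) he (inner_zero_right e)).mpr (by simpa)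

theorem mem_doubleCone_inter_sphere (he : ‖e‖ = 1) (hu : ⟪e, u⟫ = 0) :
    u + t • e ∈ doubleCone e ∩ sphere 0 1 ↔ u = 0 ∧ |t| = 1 ∨ ‖u‖ = 1 ∧ t = 0 := by
  rw [mem_inter_iff, mem_doubleCone_add_smul he hu, mem_sphere_zero_iff_norm,
    ← pow_eq_one_iff_of_nonneg (norm_nonneg _) two_ne_zero, norm_add_smul_sq_of_inner_eq_zero he hu, ← sq_abs t]
  constructor
  · rintro ⟨hle, hsq⟩
    have : ‖u‖ * |t| = 0 := by nlinarith [norm_nonneg u, abs_nonneg t]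
    rcases mul_eq_zero.mp this with h | h
    · exact .inl ⟨norm_eq_zero.mp h, by nlinarith [abs_nonneg t]⟩
    · exact .inr ⟨by nlinarith [norm_nonneg u], abs_eq_zero.mp h⟩
  · rintro (⟨rfl, h⟩ | ⟨h, rfl⟩) <;> simp [h]

theorem exists_mem_doubleCone_inter_sphere_add_mem (he : ‖e‖ = 1) (hu : ⟪e, u⟫ = 0) (h : ‖u‖ + |t| ≤ 1) :
    ∃ x ∈ doubleCone e ∩ sphere 0 1, u + t • e + x ∈ doubleCone e := by
  rcases le_or_gt ‖u‖ |t| with hut | htu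
  · have ht1 : |t| ≤ 1 := by linarith [norm_nonneg u]
    obtain ⟨σ, hσ, hσt⟩ : ∃ σ : ℝ, |σ| = 1 ∧ |t + σ| = 1 - |t| := by
      rcases le_total 0 t with ht | ht
      · refine ⟨-1, by simp, ?_⟩
        rw [abs_of_nonneg ht] at ht1 ⊢
        rw [abs_of_nonpos (by linarith)]
        ring
      · refine ⟨1, abs_one, ?_⟩
        rw [abs_of_nonpos ht] at ht1 ⊢
        rw [abs_of_nonneg (by linarith)]
        ring
    refine ⟨σ • e, ?_, ?_⟩
    · simpa using (mem_doubleCone_inter_sphere he (inner_zero_right e)).mpr (.inl ⟨rfl, hσ⟩)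
    · rw [show u + t • e + σ • e = u + (t + σ) • e by module, mem_doubleCone_add_smul he hu]
      linarith
  · have hu0 : 0 < ‖u‖ := (abs_nonneg t).trans_lt htu
    have hcu : ∀ c : ℝ, ⟪e, c • u⟫ = 0 := fun c => by rw [inner_smul_right, hu, mul_zero]
    refine ⟨-‖u‖⁻¹ • u, ?_, ?_⟩
    · simpa using (mem_doubleCone_inter_sphere he (hcu (-‖u‖⁻¹)) (t := 0)).mpr
        (.inr ⟨by simp [norm_smul, hu0.ne'], rfl⟩)
    · rw [show u + t • e + -‖u‖⁻¹ • u = (1 - ‖u‖⁻¹) • u + t • e by module,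
        mem_doubleCone_add_smul he (hcu _), norm_smul, ← abs_of_pos hu0, Real.norm_eq_abs,
        ← abs_mul, abs_of_pos hu0, sub_mul, inv_mul_cancel₀ hu0.ne', one_mul,
        abs_of_nonpos (by linarith [abs_nonneg t])]
      linarith

theorem doubleCone_subset_biUnion_image_sub (he : ‖e‖ = 1) :
    doubleCone e ⊆ ⋃ x ∈ doubleCone e ∩ sphere 0 1, (· - x) '' doubleCone e := by
  intro y hy
  obtain ⟨u, t, hu, rfl⟩ := exists_inner_eq_zero_eq_add_smul he y
  obtain ⟨x, hx, hyx⟩ := exists_mem_doubleCone_inter_sphere_add_mem he hu ((mem_doubleCone_add_smul he hu).mp hy)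
  exact mem_biUnion hx ⟨_, hyx, add_sub_cancel_right _ _⟩

theorem add_notMem_doubleCone (he : ‖e‖ = 1) (hv : ⟪e, v⟫ = 0) (hv1 : ‖v‖ = 1) (hs : 0 < s)
    {γ : ℝ} (hγ0 : 0 < γ) (hγ1 : γ < 1) (hx : x ∈ doubleCone e ∩ sphere 0 1)
    (hvx : -⟪v, x⟫ < γ) : s • v + (s * γ) • e + x ∉ doubleCone e := by
  obtain ⟨w, τ, hw, rfl⟩ := exists_inner_eq_zero_eq_add_smul he x
  have hsw : ⟪e, s • v + w⟫ = 0 := by simp [inner_add_right, inner_smul_right, hv, hw]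
  rw [show s • v + (s * γ) • e + (w + τ • e) = (s • v + w) + (s * γ + τ) • e by module,
    mem_doubleCone_add_smul he hsw, not_le]
  have hsγ : 0 < s * γ := mul_pos hs hγ0
  rcases (mem_doubleCone_inter_sphere he hw).mp hx with ⟨rfl, hτ⟩ | ⟨hw1, rfl⟩
  · -- at an apex, the horizontal displacement `s` exceeds the vertical gain `s * γ`
    rw [add_zero, norm_smul, hv1, Real.norm_of_nonneg hs.le, mul_one]
    have := abs_sub_abs_le_abs_add τ (s * γ)
    rw [abs_of_pos hsγ, add_comm τ] at this
    linarith [mul_lt_of_lt_one_right hs hγ1]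
  · have hvw : -⟪v, w⟫ < γ := by
      simpa [inner_add_right, inner_smul_right] using hvx
    rw [add_zero, abs_of_pos hsγ]
    have : (1 - s * γ) ^ 2 < ‖s • v + w‖ ^ 2 := by
      rw [norm_add_sq_real, norm_smul, hv1, hw1, real_inner_smul_left, Real.norm_of_nonneg hs.le]
      nlinarith [mul_pos hs (by linarith : 0 < ⟪v, w⟫ + γ),
        mul_pos (mul_pos hs hs) (by nlinarith : 0 < 1 - γ ^ 2)]
    linarith [lt_of_pow_lt_pow_left₀ 2 (norm_nonneg _) this]

theorem not_ball_subset_iUnion_image_sub_doubleCone (he : ‖e‖ = 1) (hE : 2 < Module.finrank ℝ E) {ι : Type*}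
    [Finite ι] {x : ι → E} (hx : ∀ i, x i ∈ doubleCone e ∩ sphere 0 1) {δ : ℝ} (hδ : 0 < δ) :
    ¬ ball 0 δ ⊆ ⋃ i, (· - x i) '' doubleCone e := by
  obtain ⟨v, ⟨hv, hv1⟩, hvx⟩ := ((infinite_setOf_inner_eq_zero_norm_eq_one
    (norm_ne_zero_iff.mp (he ▸ one_ne_zero)) hE).sdiff (finite_range fun i => -x i)).nonempty
  obtain ⟨γ, hγ0, hγ1, hγ⟩ := exists_pos_lt_one_forall_lt fun i => neg_lt.mp
    (neg_one_lt_inner_of_ne_neg hv1 (mem_sphere_zero_iff_norm.mp (hx i).2) fun h => hvx ⟨i, h.symm⟩)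
  have hs : 0 < δ / 2 := half_pos hδ
  have hy : (δ / 2) • v + (δ / 2 * γ) • e ∈ ball (0 : E) δ := by
    rw [mem_ball_zero_iff]
    calc ‖(δ / 2) • v + (δ / 2 * γ) • e‖ ≤ δ / 2 + δ / 2 * γ := by
          refine (norm_add_le _ _).trans_eq ?_
          rw [norm_smul, norm_smul, hv1, he, Real.norm_of_nonneg hs.le,
            Real.norm_of_nonneg (mul_pos hs hγ0).le, mul_one, mul_one]
      _ < δ := by nlinarith
  intro hcover
  obtain ⟨i, z, hz, hzy⟩ := by simpa only [mem_iUnion, mem_image] using hcover hy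
  exact add_notMem_doubleCone he hv hv1 hs hγ0 hγ1 (hx i) (hγ i) (eq_add_of_sub_eq hzy ▸ hz)

theorem setOf_eq_doubleCone_single (m : ℕ) :
    {x : EuclideanSpace ℝ (Fin (m + 1)) | √(∑ i : Fin m, x i.castSucc ^ 2) + |x (Fin.last m)| ≤ 1}
      = doubleCone (EuclideanSpace.single (Fin.last m) 1) := by
  ext x
  have hinner : ⟪EuclideanSpace.single (Fin.last m) 1, x⟫ = x (Fin.last m) := by
    simp [EuclideanSpace.inner_single_left]
  simp only [doubleCone, mem_ofPred_eq, hinner, EuclideanSpace.norm_eq, Fin.sum_univ_castSucc]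
  simp [(Fin.castSucc_lt_last _).ne]

end

/-- Remark 3.2 (B): for `n = m + 1 ≥ 3`, the compact double cone
`K = {x ∈ ℝⁿ : ‖(x_1,…,x_{n-1})‖ + |x_n| ≤ 1}` has circumball `B(o,1)` and is covered by the
translates `K - x`, `x ∈ K ∩ S^{n-1}`, yet no finitely many such translates cover a
neighborhood of the origin. -/
theorem double_cone_cover_but_no_finite_cover {m : ℕ} (hm : 2 ≤ m)
    (K : Set (EuclideanSpace ℝ (Fin (m + 1))))
    (hK : K = {x : EuclideanSpace ℝ (Fin (m + 1)) |
      Real.sqrt (∑ i : Fin m, x i.castSucc ^ 2) + |x (Fin.last m)| ≤ 1}) :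
    IsCircumball K 0 1 ∧
    K ⊆ (⋃ x ∈ K ∩ sphere (0 : EuclideanSpace ℝ (Fin (m + 1))) 1, (· - x) '' K) ∧
    ∀ (k : ℕ) (x : Fin k → EuclideanSpace ℝ (Fin (m + 1))),
      (∀ i, x i ∈ K ∩ sphere (0 : EuclideanSpace ℝ (Fin (m + 1))) 1) →
      ∀ δ : ℝ, 0 < δ →
        ¬ (ball (0 : EuclideanSpace ℝ (Fin (m + 1))) δ ⊆ ⋃ i, (· - x i) '' K) := by
  rw [hK, setOf_eq_doubleCone_single]
  set e : EuclideanSpace ℝ (Fin (m + 1)) := EuclideanSpace.single (Fin.last m) 1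
  have he : ‖e‖ = 1 := by simp [e]
  have hE : 2 < Module.finrank ℝ (EuclideanSpace ℝ (Fin (m + 1))) := by simp; omega
  refine ⟨⟨doubleCone_subset_closedBall he, fun c R hKR => ?_⟩,
    doubleCone_subset_biUnion_image_sub he,
    fun k x hx δ hδ => not_ball_subset_iUnion_image_sub_doubleCone he hE hx hδ⟩
  have he_mem := hKR (smul_mem_doubleCone he (t := 1) (by simp))
  have hne_mem := hKR (smul_mem_doubleCone he (t := -1) (by simp))
  rw [one_smul] at he_mem
  rw [neg_one_smul] at hne_mem
  simpa [he] using norm_le_of_mem_closedBall_of_neg_mem he_mem hne_mem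
end

section
/- For the closed unit disc B(o,1) ⊆ ℝ², the quantified t-illumination number satisfies i(B(o,1),ρ) = 3 for every ρ with 0 < ρ ≤ 1, and i(B(o,1),ρ) = ∞ for every ρ > 1. -/
/-!
Three directions at mutual angles `2π/3` suffice when `ρ ≤ 1`: every `x` makes an angle of at
least `2π/3` with one of them, `v` say, and then `‖x + ρ v‖² ≤ ‖x‖² - ρ‖x‖ + ρ² ≤ 1`.
Two directions `r₁, r₂` never suffice: a unit vector `x ⊥ r₁`, with its sign chosen so that
`⟪x, r₂⟫ ≥ 0`, is pushed out of the disc by both. When `ρ > 1` the centre cannot be illuminated.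
-/

open Metric Set
open scoped RealInnerProductSpace

theorem exists_le_neg_half_of_sum_eq_zero {a b c s : ℝ} (hsum : a + b + c = 0)
    (hsq : a ^ 2 + b ^ 2 + c ^ 2 = 3 / 2 * s ^ 2) : a ≤ -(s / 2) ∨ b ≤ -(s / 2) ∨ c ≤ -(s / 2) := by
  by_contra! ⟨ha, hb, hc⟩
  -- the pairwise products of `a + s/2`, `b + s/2`, `c + s/2` would be positive, yet they sum to `0`
  nlinarith [mul_pos (neg_lt_iff_pos_add.mp ha) (neg_lt_iff_pos_add.mp hb),
    mul_pos (neg_lt_iff_pos_add.mp hb) (neg_lt_iff_pos_add.mp hc),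
    mul_pos (neg_lt_iff_pos_add.mp ha) (neg_lt_iff_pos_add.mp hc)]

theorem Finset.exists_subset_pair_of_card_le_two {α : Type*} [DecidableEq α] [Nonempty α]
    {s : Finset α} (hs : s.card ≤ 2) : ∃ a b : α, s ⊆ {a, b} := by
  rcases s.eq_empty_or_nonempty with rfl | ⟨a, ha⟩
  · exact ⟨Classical.arbitrary α, Classical.arbitrary α, Finset.empty_subset _⟩
  obtain ⟨b, hb⟩ := Finset.card_le_one_iff_subset_singleton.mp
    (by rw [Finset.card_erase_of_mem ha]; omega : (s.erase a).card ≤ 1)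
  refine ⟨a, b, fun x hx => ?_⟩
  rcases eq_or_ne x a with rfl | hxa
  · exact Finset.mem_insert_self x _
  · exact Finset.mem_insert_of_mem (hb (Finset.mem_erase.mpr ⟨hxa, hx⟩))

section InnerProductSpace

variable {E : Type*} [NormedAddCommGroup E] [InnerProductSpace ℝ E]

theorem norm_add_smul_sq_of_norm_eq_one {v : E} (hv : ‖v‖ = 1) (x : E) (ρ : ℝ) :
    ‖x + ρ • v‖ ^ 2 = ‖x‖ ^ 2 + 2 * ρ * ⟪x, v⟫ + ρ ^ 2 := by
  rw [norm_add_sq_real, inner_smul_right, norm_smul, hv, Real.norm_eq_abs, mul_one, sq_abs]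
  ring

theorem one_lt_norm_add_smul {x v : E} (hx : ‖x‖ = 1) (hv : ‖v‖ = 1)
    (hxv : 0 ≤ ⟪x, v⟫) {ρ : ℝ} (hρ : 0 < ρ) : 1 < ‖x + ρ • v‖ := by
  have h := norm_add_smul_sq_of_norm_eq_one hv x ρ
  rw [hx] at h
  nlinarith [mul_nonneg hρ.le hxv, norm_nonneg (x + ρ • v)]

theorem norm_add_smul_le_one {x v : E} (hx : ‖x‖ ≤ 1) (hv : ‖v‖ = 1)
    (hxv : ⟪x, v⟫ ≤ -(‖x‖ / 2)) {ρ : ℝ} (hρ₀ : 0 ≤ ρ) (hρ₁ : ρ ≤ 1) :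
    ‖x + ρ • v‖ ≤ 1 := by
  have h := norm_add_smul_sq_of_norm_eq_one hv x ρ
  have hs := norm_nonneg x
  have : ‖x + ρ • v‖ ^ 2 ≤ 1 := by
    nlinarith [mul_le_mul_of_nonneg_left hxv hρ₀, mul_nonneg (sub_nonneg.2 hx) (sub_nonneg.2 hρ₁),
      mul_nonneg hs (sub_nonneg.2 hx), mul_nonneg hρ₀ (sub_nonneg.2 hρ₁)]
  nlinarith [norm_nonneg (x + ρ • v)]

theorem exists_norm_eq_one_inner_eq_zero [FiniteDimensional ℝ E] (hE : 2 ≤ Module.finrank ℝ E)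
    (u : E) : ∃ x : E, ‖x‖ = 1 ∧ ⟪x, u⟫ = 0 := by
  have hK : (ℝ ∙ u)ᗮ ≠ ⊥ := by
    intro h
    have := (ℝ ∙ u).finrank_add_finrank_orthogonal
    rw [h, finrank_bot] at this
    have := finrank_span_le_card (R := ℝ) ({u} : Set E)
    simp only [Set.toFinset_singleton, Finset.card_singleton] at this
    omega
  obtain ⟨y, hy, hy0⟩ := Submodule.exists_mem_ne_zero_of_ne_bot hK
  refine ⟨‖y‖⁻¹ • y, norm_smul_inv_norm hy0, ?_⟩
  rw [real_inner_smul_left, Submodule.mem_orthogonal_singleton_iff_inner_left.mp hy, mul_zero]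

theorem exists_norm_eq_one_forall_inner_nonneg [FiniteDimensional ℝ E]
    (hE : 2 ≤ Module.finrank ℝ E) {s : Finset E} (hs : s.card ≤ 2) :
    ∃ x : E, ‖x‖ = 1 ∧ ∀ r ∈ s, 0 ≤ ⟪x, r⟫ := by
  classical
  obtain ⟨u, v, hsuv⟩ := Finset.exists_subset_pair_of_card_le_two hs
  obtain ⟨x, hx, hxu⟩ := exists_norm_eq_one_inner_eq_zero hE u
  obtain ⟨y, hy, hyu, hyv⟩ : ∃ y : E, ‖y‖ = 1 ∧ ⟪y, u⟫ = 0 ∧ 0 ≤ ⟪y, v⟫ := by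
    rcases le_total 0 ⟪x, v⟫ with hxv | hxv
    · exact ⟨x, hx, hxu, hxv⟩
    · refine ⟨-x, by rw [norm_neg, hx], by rw [inner_neg_left, hxu, neg_zero], ?_⟩
      rw [inner_neg_left]
      linarith
  refine ⟨y, hy, fun r hr => ?_⟩
  rcases Finset.mem_insert.mp (hsuv hr) with rfl | hr
  · exact hyu.ge
  · rw [Finset.mem_singleton.mp hr]
    exact hyv

end InnerProductSpace

/-- The cube roots of unity, as vectors of `ℝ²`. -/
noncomputable def triad : Fin 3 → EuclideanSpace ℝ (Fin 2) :=
  ![!₂[1, 0], !₂[-1 / 2, √3 / 2], !₂[-1 / 2, -(√3 / 2)]]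

theorem norm_triad (i : Fin 3) : ‖triad i‖ = 1 := by
  rw [EuclideanSpace.norm_eq, Real.sqrt_eq_one]
  fin_cases i <;> simp [triad, Fin.sum_univ_two, div_pow] <;> norm_num

theorem exists_inner_triad_le (x : EuclideanSpace ℝ (Fin 2)) :
    ∃ i, ⟪x, triad i⟫ ≤ -(‖x‖ / 2) := by
  have h3 : √3 ^ 2 = 3 := Real.sq_sqrt (by norm_num)
  have hx : ‖x‖ ^ 2 = x 0 ^ 2 + x 1 ^ 2 := by
    simp [EuclideanSpace.norm_sq_eq, Fin.sum_univ_two]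
  have hinner : ∀ i, ⟪x, triad i⟫ = x 0 * triad i 0 + x 1 * triad i 1 := fun i => by
    simp [PiLp.inner_apply, Fin.sum_univ_two, mul_comm]
  obtain h | h | h := exists_le_neg_half_of_sum_eq_zero
    (s := ‖x‖) (a := ⟪x, triad 0⟫) (b := ⟪x, triad 1⟫) (c := ⟪x, triad 2⟫)
    (by simp only [hinner]; simp [triad]; ring)
    (by simp only [hinner, hx]; simp [triad]; nlinarith)
  exacts [⟨0, h⟩, ⟨1, h⟩, ⟨2, h⟩]

section Illumination

variable {n : ℕ} {K : Set (EuclideanSpace ℝ (Fin n))} {ε : ℝ}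

theorem iq_le_of_forall_exists {m : ℕ} (r : Fin m → EuclideanSpace ℝ (Fin n))
    (hr : ∀ i, ‖r i‖ = 1) (hK : ∀ x ∈ K, ∃ i, x + ε • r i ∈ K) : iq K ε ≤ m := by
  classical
  calc iq K ε ≤ (Finset.univ.image r).card :=
        sInf_le ⟨_, rfl, by simpa using hr, by simpa using hK⟩
    _ ≤ m := mod_cast Finset.card_image_le.trans (Finset.card_fin m).le

theorem le_iq_of_forall_le_card {m : ℕ∞}
    (h : ∀ s : Finset (EuclideanSpace ℝ (Fin n)), (∀ r ∈ s, ‖r‖ = 1) →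
      (∀ x ∈ K, ∃ r ∈ s, x + ε • r ∈ K) → m ≤ s.card) : m ≤ iq K ε :=
  le_sInf fun _ ⟨s, hs, hr, hK⟩ => hs ▸ h s hr hK

theorem iq_eq_top_of_exists_forall_notMem {x : EuclideanSpace ℝ (Fin n)} (hx : x ∈ K)
    (h : ∀ r, ‖r‖ = 1 → x + ε • r ∉ K) : iq K ε = ⊤ :=
  top_le_iff.mp <| le_iq_of_forall_le_card fun _ hr hK =>
    let ⟨r, hrs, hxr⟩ := hK x hx
    absurd hxr (h r (hr r hrs))

theorem iq_closedBall_eq_top (hε : 1 < ε) :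
    iq (closedBall (0 : EuclideanSpace ℝ (Fin n)) 1) ε = ⊤ := by
  refine iq_eq_top_of_exists_forall_notMem (mem_closedBall_self zero_le_one) fun r hr => ?_
  rw [mem_closedBall, dist_zero_right, zero_add, norm_smul, hr, mul_one, Real.norm_eq_abs,
    abs_of_pos (zero_lt_one.trans hε)]
  exact hε.not_ge

theorem three_le_iq_closedBall (hn : 2 ≤ n) (hε : 0 < ε) :
    3 ≤ iq (closedBall (0 : EuclideanSpace ℝ (Fin n)) 1) ε := by
  refine le_iq_of_forall_le_card fun s hr hK => ?_
  by_contra! hs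
  obtain ⟨x, hx, hxs⟩ := exists_norm_eq_one_forall_inner_nonneg (s := s)
    (by rwa [finrank_euclideanSpace_fin]) (by norm_cast at hs; omega)
  obtain ⟨r, hrs, hxr⟩ := hK x (by rw [mem_closedBall, dist_zero_right, hx])
  rw [mem_closedBall, dist_zero_right] at hxr
  exact (one_lt_norm_add_smul hx (hr r hrs) (hxs r hrs) hε).not_ge hxr

theorem iq_closedBall_le_three (hε₀ : 0 ≤ ε) (hε₁ : ε ≤ 1) :
    iq (closedBall (0 : EuclideanSpace ℝ (Fin 2)) 1) ε ≤ 3 := by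
  refine iq_le_of_forall_exists triad norm_triad fun x hx => ?_
  rw [mem_closedBall, dist_zero_right] at hx
  obtain ⟨i, hi⟩ := exists_inner_triad_le x
  refine ⟨i, ?_⟩
  rw [mem_closedBall, dist_zero_right]
  exact norm_add_smul_le_one hx (norm_triad i) hi hε₀ hε₁

end Illumination

/-- Example (α): for the closed unit disc `B(o,1) ⊆ ℝ²`, `i(B(o,1),ρ) = 3` for `0 < ρ ≤ 1`
and `i(B(o,1),ρ) = ∞` for `ρ > 1`. -/
theorem iq_unit_disc (ρ : ℝ) :
    (0 < ρ → ρ ≤ 1 → iq (closedBall (0 : EuclideanSpace ℝ (Fin 2)) 1) ρ = 3) ∧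
    (1 < ρ → iq (closedBall (0 : EuclideanSpace ℝ (Fin 2)) 1) ρ = ⊤) :=
  ⟨fun hρ₀ hρ₁ => le_antisymm (iq_closedBall_le_three hρ₀.le hρ₁)
    (three_le_iq_closedBall le_rfl hρ₀), iq_closedBall_eq_top⟩
end

section
/- For every triangle T ⊆ ℝ² (the convex hull of three affinely independent points), i(T,R(T)) = ∞: no finite family of unit vectors r_1,…,r_m ∈ S^1 satisfies that every x ∈ T has x + R(T)·r_i ∈ T for some i. -/
/-!
The minimal enclosing ball `B(c, R)` of a simplex has its centre in the convex hull of the vertices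
on its boundary sphere: otherwise a direction separating `c` from that hull moves the centre so
that every vertex becomes strictly closer, and the ball could shrink. Hence `c` lies in the
simplex, is not a vertex, and so has two positive barycentric coordinates; pushing `c` towards a
third vertex gives a segment `c + t • d` inside the simplex such that `v + t • d` leaves the
simplex for every vertex `v` and every `t > 0`. Now take finitely many unit vectors `r`. For each
`r`, either `c + R • r` lies outside the closed simplex, and then so does `c + t • d + R • r` for
small `t`; or it is a point of the simplex on the sphere, hence a vertex `v`, and
`c + t • d + R • r = v + t • d` is outside for all `t > 0`. So no `r` serves the point `c + t • d`
once `t` is small.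
-/

open Metric Set
open scoped RealInnerProductSpace

open Filter Topology

theorem Set.Finite.exists_lt_subset_closedBall {α : Type*} [PseudoMetricSpace α] {P : Set α}
    (hP : P.Finite) {x : α} {r : ℝ} (h : P ⊆ ball x r) : ∃ r' < r, P ⊆ closedBall x r' := by
  have hsub : ∀ᶠ r' in 𝓝[<] r, ∀ v ∈ P, dist v x ≤ r' :=
    hP.eventually_all.2 fun v hv => mem_of_superset (Ioo_mem_nhdsLT (h hv)) fun _ h' => h'.1.le
  obtain ⟨r', hr', hlt⟩ := (hsub.and self_mem_nhdsWithin).exists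
  exact ⟨r', hlt, hr'⟩

section InnerProductSpace

variable {E : Type*} [NormedAddCommGroup E] [InnerProductSpace ℝ E]

theorem eventually_dist_add_smul_lt {v c w : E} {R : ℝ} (hv : dist v c ≤ R)
    (hw : dist v c = R → 0 < ⟪w, v - c⟫) :
    ∀ᶠ δ in 𝓝[>] (0 : ℝ), dist v (c + δ • w) < R := by
  rcases hv.lt_or_eq with hlt | heq
  · have hcont : Continuous fun δ : ℝ => dist v (c + δ • w) := by fun_prop
    refine nhdsWithin_le_nhds (hcont.tendsto' 0 _ ?_ |>.eventually (gt_mem_nhds hlt))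
    simp
  · have hsq : ∀ δ : ℝ,
        dist v (c + δ • w) ^ 2 = R ^ 2 - δ * (2 * ⟪w, v - c⟫ - δ * ‖w‖ ^ 2) := by
      intro δ
      rw [dist_eq_norm, show v - (c + δ • w) = (v - c) - δ • w by abel, norm_sub_sq_real,
        ← dist_eq_norm, heq, real_inner_smul_right, real_inner_comm, norm_smul, mul_pow,
        Real.norm_eq_abs, sq_abs]
      ring
    have hsmall : ∀ᶠ δ in 𝓝 (0 : ℝ), δ * ‖w‖ ^ 2 < 2 * ⟪w, v - c⟫ := by
      have : Tendsto (fun δ : ℝ => δ * ‖w‖ ^ 2) (𝓝 0) (𝓝 0) :=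
        (by fun_prop : Continuous fun δ : ℝ => δ * ‖w‖ ^ 2).tendsto' 0 0 (zero_mul _)
      exact this.eventually (gt_mem_nhds (by linarith [hw heq]))
    filter_upwards [nhdsWithin_le_nhds hsmall, self_mem_nhdsWithin] with δ hδ (hδ0 : 0 < δ)
    refine lt_of_pow_lt_pow_left₀ 2 (heq ▸ dist_nonneg) ?_
    rw [hsq]
    nlinarith

theorem center_mem_convexHull_inter_sphere [CompleteSpace E] {P : Set E} (hP : P.Finite)
    {c : E} {R : ℝ} (hPc : P ⊆ closedBall c R)
    (hmin : ∀ (c' : E) (R' : ℝ), P ⊆ closedBall c' R' → R ≤ R') :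
    c ∈ convexHull ℝ (P ∩ sphere c R) := by
  by_contra hc
  obtain ⟨f, u, hfc, hfC⟩ := geometric_hahn_banach_point_closed (convex_convexHull ℝ _)
    ((hP.subset inter_subset_left).isClosed_convexHull (𝕜 := ℝ)) hc
  set w := (InnerProductSpace.toDual ℝ E).symm f
  have hw : ∀ v ∈ P, dist v c = R → 0 < ⟪w, v - c⟫ := fun v hv hvR => by
    have := hfC v (subset_convexHull ℝ _ ⟨hv, hvR⟩)
    rw [InnerProductSpace.toDual_symm_apply, map_sub]
    linarith
  obtain ⟨δ, hδ⟩ := (hP.eventually_all.2 fun v hv =>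
    eventually_dist_add_smul_lt (hPc hv) (hw v hv)).exists
  obtain ⟨R', hR'R, hR'⟩ := hP.exists_lt_subset_closedBall hδ
  exact (hmin _ _ hR').not_gt hR'R

end InnerProductSpace

theorem convexHull_inter_sphere_subset {E : Type*} [NormedAddCommGroup E] [NormedSpace ℝ E]
    [StrictConvexSpace ℝ E] {P : Set E} {c : E} {R : ℝ} (hR : R ≠ 0)
    (h : convexHull ℝ P ⊆ closedBall c R) : convexHull ℝ P ∩ sphere c R ⊆ P := fun _ hv =>
  extremePoints_convexHull_subset <| inter_extremePoints_subset_extremePoints_of_subset h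
    ⟨hv.1, StrictConvexSpace.sphere_subset_extremePoints_closedBall c hR hv.2⟩

namespace AffineBasis

variable {ι 𝕜 E : Type*} [Field 𝕜] [LinearOrder 𝕜] [IsStrictOrderedRing 𝕜] [AddCommGroup E]
  [Module 𝕜 E] (B : AffineBasis ι 𝕜 E)

theorem mem_of_apply_mem_convexHull_image {s : Set ι} {i : ι} (h : B i ∈ convexHull 𝕜 (B '' s)) :
    i ∈ s := by
  by_contra hi
  have hsub : B '' s ⊆ B.coord i ⁻¹' {0} := by
    rintro _ ⟨j, hj, rfl⟩
    exact B.coord_apply_ne fun hij => hi (hij ▸ hj)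
  have := convexHull_min hsub ((convex_singleton 0).affine_preimage _) h
  simp [B.coord_apply_eq] at this

theorem add_smul_sub_notMem_convexHull {x : E} {i j k : ι} (hki : k ≠ i) (hkj : k ≠ j)
    (hk : 0 < B.coord k x) {t : 𝕜} (ht : 0 < t) :
    B i + t • (B j - x) ∉ convexHull 𝕜 (range B) := by
  rw [B.convexHull_eq_nonneg_coord]
  intro h
  have hcoord : B.coord k (B i + t • (B j - x)) = -(t * B.coord k x) := by
    rw [add_comm, ← vadd_eq_add, AffineMap.map_vadd, map_smul, ← vsub_eq_sub,
      AffineMap.linearMap_vsub, B.coord_apply_ne hki, B.coord_apply_ne hkj]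
    simp
  have := h k
  rw [hcoord] at this
  nlinarith [mul_pos ht hk]

theorem exists_ne_coord_pos [Fintype ι] {x : E} (hx : x ∈ convexHull 𝕜 (range B))
    (hxB : x ∉ range B) :
    ∃ p q, p ≠ q ∧ 0 < B.coord p x ∧ 0 < B.coord q x := by
  rw [B.convexHull_eq_nonneg_coord] at hx
  have hsum := B.sum_coord_apply_eq_one x
  obtain ⟨p, hp⟩ : ∃ p, 0 < B.coord p x := by
    by_contra! h
    linarith [Finset.sum_nonpos fun i (_ : i ∈ Finset.univ) => h i]
  by_contra! hq
  have hzero : ∀ i ≠ p, B.coord i x = 0 := fun i hi => le_antisymm (hq p i hi.symm hp) (hx i)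
  have hone : B.coord p x = 1 := by
    rwa [Finset.sum_eq_single p (fun i _ hi => hzero i hi) (by simp)] at hsum
  refine hxB ⟨p, B.ext_elem fun i => ?_⟩
  rcases eq_or_ne i p with rfl | hi
  · rw [B.coord_apply_eq, hone]
  · rw [B.coord_apply_ne hi, hzero i hi]

theorem exists_forall_add_smul_notMem_convexHull [Fintype ι] (hι : 2 < Fintype.card ι) {x : E}
    (hx : x ∈ convexHull 𝕜 (range B)) (hxB : x ∉ range B) :
    ∃ d : E, (∀ t ∈ Icc (0 : 𝕜) 1, x + t • d ∈ convexHull 𝕜 (range B)) ∧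
      ∀ i, ∀ t : 𝕜, 0 < t → B i + t • d ∉ convexHull 𝕜 (range B) := by
  classical
  obtain ⟨p, q, hpq, hp, hq⟩ := B.exists_ne_coord_pos hx hxB
  obtain ⟨j, -, hj⟩ := Finset.exists_mem_notMem_of_card_lt_card (s := {p, q})
    (t := Finset.univ) ((Finset.card_le_two).trans_lt hι)
  simp only [Finset.mem_insert, Finset.mem_singleton, not_or] at hj
  refine ⟨B j - x, fun t ht => (convex_convexHull 𝕜 _).add_smul_sub_mem hx
    (subset_convexHull 𝕜 _ (mem_range_self j)) ht, fun i t ht => ?_⟩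
  rcases eq_or_ne i p with rfl | hip
  · exact B.add_smul_sub_notMem_convexHull hpq.symm (Ne.symm hj.2) hq ht
  · exact B.add_smul_sub_notMem_convexHull (Ne.symm hip) (Ne.symm hj.1) hp ht

end AffineBasis

theorem iq_eq_top_of_forall_add_smul_notMem {n : ℕ} {K : Set (EuclideanSpace ℝ (Fin n))}
    (hK : IsClosed K) {ε : ℝ} (hε : 0 ≤ ε) {p d : EuclideanSpace ℝ (Fin n)}
    (hpd : ∀ᶠ t in 𝓝[>] (0 : ℝ), p + t • d ∈ K)
    (hsph : ∀ v ∈ K ∩ sphere p ε, ∀ t : ℝ, 0 < t → v + t • d ∉ K) : iq K ε = ⊤ := by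
  rw [iq, sInf_eq_top]
  rintro _ ⟨s, -, hunit, hcov⟩
  have hesc : ∀ r ∈ s, ∀ᶠ t in 𝓝[>] (0 : ℝ), p + t • d + ε • r ∉ K := fun r hr => by
    by_cases h : p + ε • r ∈ K
    · have hv : p + ε • r ∈ K ∩ sphere p ε :=
        ⟨h, by simp [norm_smul, hunit r hr, abs_of_nonneg hε]⟩
      filter_upwards [self_mem_nhdsWithin] with t ht
      rw [add_right_comm]
      exact hsph _ hv t ht
    · have hcont : Continuous fun t : ℝ => p + t • d + ε • r := by fun_prop
      exact nhdsWithin_le_nhds <| (hcont.tendsto' 0 _ (by simp)).eventually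
        (hK.isOpen_compl.mem_nhds h)
  obtain ⟨t, hpt, hts⟩ := (hpd.and (s.eventually_all.2 hesc)).exists
  obtain ⟨r, hr, hmem⟩ := hcov _ hpt
  exact (hts r hr hmem).elim

theorem iq_convexHull_affineBasis_eq_top {n : ℕ} {ι : Type*} [Fintype ι]
    (hι : 2 < Fintype.card ι) (B : AffineBasis ι ℝ (EuclideanSpace ℝ (Fin n)))
    {c : EuclideanSpace ℝ (Fin n)} {R : ℝ} (hcirc : IsCircumball (convexHull ℝ (range B)) c R) :
    iq (convexHull ℝ (range B)) R = ⊤ := by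
  obtain ⟨hball, hmin⟩ := hcirc
  have hR : 0 < R := by
    obtain ⟨i, j, hij⟩ := Fintype.exists_pair_of_one_lt_card (by omega : 1 < Fintype.card ι)
    have hi := hball (subset_convexHull ℝ _ (mem_range_self i))
    have hj := hball (subset_convexHull ℝ _ (mem_range_self j))
    have := dist_pos.2 (B.ind.injective.ne hij)
    rw [mem_closedBall] at hi hj
    linarith [dist_triangle_right (B i) (B j) c]
  have hc : c ∈ convexHull ℝ (range B ∩ sphere c R) :=
    center_mem_convexHull_inter_sphere (finite_range B) ((subset_convexHull ℝ _).trans hball)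
      fun c' R' h => hmin c' R' (convexHull_min h (convex_closedBall c' R'))
  have hcB : c ∉ range B := by
    rintro ⟨i, rfl⟩
    rw [← image_preimage_eq_range_inter] at hc
    have : B i ∈ sphere (B i) R := B.mem_of_apply_mem_convexHull_image hc
    simp [hR.ne] at this
  obtain ⟨d, hd_in, hd_out⟩ := B.exists_forall_add_smul_notMem_convexHull hι
    (convexHull_mono inter_subset_left hc) hcB
  refine iq_eq_top_of_forall_add_smul_notMem ((finite_range B).isClosed_convexHull (𝕜 := ℝ))
    hR.le (mem_of_superset (Icc_mem_nhdsGT one_pos) hd_in) fun v hv t ht => ?_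
  obtain ⟨i, rfl⟩ := convexHull_inter_sphere_subset hR.ne' hball hv
  exact hd_out i t ht

/-- Example (β): every triangle `T ⊆ ℝ²` satisfies `i(T,R(T)) = ∞`. -/
theorem iq_triangle_at_circumradius_eq_top (a b c : EuclideanSpace ℝ (Fin 2))
    (habc : AffineIndependent ℝ ![a, b, c])
    (T : Set (EuclideanSpace ℝ (Fin 2))) (hT : T = convexHull ℝ {a, b, c})
    (cc : EuclideanSpace ℝ (Fin 2)) (R : ℝ) (hcirc : IsCircumball T cc R) :
    iq T R = ⊤ := by
  have hspan : affineSpan ℝ (range ![a, b, c]) = ⊤ :=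
    habc.affineSpan_eq_top_iff_card_eq_finrank_add_one.2 (by simp)
  let B : AffineBasis (Fin 3) ℝ (EuclideanSpace ℝ (Fin 2)) := ⟨![a, b, c], habc, hspan⟩
  have hrange : range B = {a, b, c} := by
    change range ![a, b, c] = _
    simp only [Matrix.range_cons, Matrix.range_empty, union_empty, singleton_union]
  rw [← hrange] at hT
  subst hT
  exact iq_convexHull_affineBasis_eq_top (by simp) B hcirc
end

section
/- A convex quadrangle Q ⊆ ℝ² satisfies i(Q,R(Q)) < ∞ if and only if Q is a rectangle; moreover, if Q is a rectangle then i(Q,R(Q)) = 4. -/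
open Metric Set
open scoped RealInnerProductSpace

/-!
If finitely many unit vectors `R`-t-illuminate `Q`, pigeonholing the directions used at the points
`x + δ • e`, `δ → 0`, shows: every direction `e` feasible at a point `x` of `Q` stays feasible at
some point `x + R • r` of `Q`, `r` one of the directions. For `x` the circumcentre `c` that point
lies on the circumsphere, so it is a vertex, and `e` has to point into the circumball there.

Applied to the inner normal of a supporting line at `c` (feasible, as `c` lies in the convex hull
of the contact points), this forces `c` into the interior of `Q`. Then every direction is feasible
at some vertex on the circumsphere. Comparing with the outer normals of the edges, opposite edges
are parallel and every vertex lies on the circumsphere; a parallelogram inscribed in a circle is a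
rectangle.

Conversely a rectangle is illuminated by the four unit vectors from its centre towards its
vertices, each serving one quadrant, and transporting the four diagonal directions from the centre
shows that each of these vectors occurs in every illuminating family.
-/

open Module Topology

section FeasibleDir

variable {E : Type*} [AddCommGroup E] [Module ℝ E]

def IsFeasibleDir (K : Set E) (x e : E) : Prop := ∃ δ : ℝ, 0 < δ ∧ x + δ • e ∈ K

def TIlluminates (K : Set E) (ε : ℝ) (s : Finset E) : Prop := ∀ x ∈ K, ∃ r ∈ s, x + ε • r ∈ K

variable {K : Set E} {x e f : E}

theorem isFeasibleDir_sub {y : E} (hy : y ∈ K) : IsFeasibleDir K x (y - x) :=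
  ⟨1, one_pos, by simpa using hy⟩

theorem IsFeasibleDir.mono {L : Set E} (h : IsFeasibleDir K x e) (hKL : K ⊆ L) :
    IsFeasibleDir L x e :=
  let ⟨δ, hδ, hmem⟩ := h; ⟨δ, hδ, hKL hmem⟩

theorem IsFeasibleDir.smul {r : ℝ} (h : IsFeasibleDir K x e) (hr : 0 < r) :
    IsFeasibleDir K x (r • e) := by
  obtain ⟨δ, hδ, hmem⟩ := h
  exact ⟨δ / r, div_pos hδ hr, by rwa [smul_smul, div_mul_cancel₀ _ hr.ne']⟩

theorem IsFeasibleDir.smul_of_isFeasibleDir_neg (hx : x ∈ K) (hfwd : IsFeasibleDir K x e)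
    (hbwd : IsFeasibleDir K x (-e)) (r : ℝ) : IsFeasibleDir K x (r • e) := by
  rcases lt_trichotomy r 0 with hr | rfl | hr
  · simpa using hbwd.smul (neg_pos.2 hr)
  · exact ⟨1, one_pos, by simpa using hx⟩
  · exact hfwd.smul hr

theorem IsFeasibleDir.exists_forall_add_smul_mem (hK : Convex ℝ K) (hx : x ∈ K)
    (h : IsFeasibleDir K x e) : ∃ δ : ℝ, 0 < δ ∧ ∀ t ∈ Icc 0 δ, x + t • e ∈ K := by
  obtain ⟨δ, hδ, hmem⟩ := h
  refine ⟨δ, hδ, fun t ht => ?_⟩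
  have := hK.add_smul_mem hx hmem (t := t / δ) ⟨div_nonneg ht.1 hδ.le, by
    rw [div_le_one hδ]; exact ht.2⟩
  rwa [smul_smul, div_mul_cancel₀ _ hδ.ne'] at this

theorem IsFeasibleDir.add (hK : Convex ℝ K) (hx : x ∈ K) (he : IsFeasibleDir K x e)
    (hf : IsFeasibleDir K x f) : IsFeasibleDir K x (e + f) := by
  obtain ⟨δ, hδ, hδe⟩ := he.exists_forall_add_smul_mem hK hx
  obtain ⟨η, hη, hηf⟩ := hf.exists_forall_add_smul_mem hK hx
  have ht : 0 < min δ η := lt_min hδ hη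
  refine ⟨min δ η / 2, half_pos ht, ?_⟩
  have hmid := hK (hδe _ ⟨ht.le, min_le_left _ _⟩) (hηf _ ⟨ht.le, min_le_right _ _⟩)
    (a := 1 / 2) (b := 1 / 2) (by norm_num) (by norm_num) (by norm_num)
  convert hmid using 1
  module

theorem mem_convexHull_setOf_eq_of_le {T : Set E} {c : E} (f : E →ₗ[ℝ] ℝ)
    (hc : c ∈ convexHull ℝ T) (hT : ∀ t ∈ T, f c ≤ f t) :
    c ∈ convexHull ℝ {t ∈ T | f t = f c} := by
  set S := {t ∈ T | f t = f c}
  have hS : ∀ y ∈ convexHull ℝ S, f y = f c := fun y hy =>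
    convexHull_min (fun t ht => ht.2) (convex_hyperplane f.isLinear _) hy
  have hC : Convex ℝ (convexHull ℝ S ∪ {y | f c < f y}) := by
    rintro y₁ h₁ y₂ h₂ a b ha hb hab
    obtain rfl : a = 1 - b := by linarith
    have hf : f ((1 - b) • y₁ + b • y₂) = (1 - b) * f y₁ + b * f y₂ := by simp
    rcases h₁ with h₁ | (h₁ : f c < f y₁) <;> rcases h₂ with h₂ | (h₂ : f c < f y₂)
    · exact Or.inl (convex_convexHull ℝ S h₁ h₂ ha hb hab)
    · rcases hb.eq_or_lt with rfl | hb
      · exact Or.inl (by simpa using h₁)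
      · exact Or.inr (show f c < _ by rw [hf, hS _ h₁]; nlinarith)
    · rcases ha.eq_or_lt with h | ha
      · exact Or.inl (by simpa [show b = 1 by linarith] using h₂)
      · exact Or.inr (show f c < _ by rw [hf, hS _ h₂]; nlinarith)
    · exact Or.inr (convex_halfSpace_gt f.isLinear (f c) h₁ h₂ ha hb hab)
  have hTC : T ⊆ convexHull ℝ S ∪ {y | f c < f y} := fun t ht =>
    (hT t ht).eq_or_lt.elim (fun h => Or.inl (subset_convexHull ℝ S ⟨ht, h.symm⟩)) Or.inr
  exact (convexHull_min hTC hC hc).resolve_right fun h => lt_irrefl (f c) h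

end FeasibleDir

theorem IsCompact.exists_forall_norm_sub_le_lt {E : Type*} [NormedAddCommGroup E] {F : Set E}
    {c : E} {R : ℝ} (hF : IsCompact F) (hR : 0 < R) (h : ∀ y ∈ F, ‖y - c‖ < R) :
    ∃ M, 0 ≤ M ∧ M < R ∧ ∀ y ∈ F, ‖y - c‖ ≤ M := by
  rcases F.eq_empty_or_nonempty with rfl | hne
  · exact ⟨0, le_rfl, hR, by simp⟩
  obtain ⟨y₀, hy₀, hmax⟩ :=
    hF.exists_isMaxOn hne (by fun_prop : Continuous fun y => ‖y - c‖).continuousOn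
  exact ⟨‖y₀ - c‖, norm_nonneg _, h y₀ hy₀, fun y hy => hmax hy⟩

section NormedSpace

variable {E : Type*} [NormedAddCommGroup E] [NormedSpace ℝ E]

theorem isFeasibleDir_of_mem_interior {K : Set E} {x : E} (hx : x ∈ interior K) (e : E) :
    IsFeasibleDir K x e := by
  have hcont : Continuous fun δ : ℝ => x + δ • e := by fun_prop
  have hev : ∀ᶠ δ in 𝓝[>] (0 : ℝ), x + δ • e ∈ K :=
    nhdsWithin_le_nhds (hcont.tendsto' 0 x (by simp) (mem_interior_iff_mem_nhds.1 hx))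
  obtain ⟨δ, hδK, hδ⟩ := (hev.and self_mem_nhdsWithin).exists
  exact ⟨δ, hδ, hδK⟩

theorem add_smul_mem_sphere {c r : E} {R : ℝ} (hR : 0 ≤ R) (hr : ‖r‖ = 1) :
    c + R • r ∈ sphere c R := by
  simp [norm_smul, hr, abs_of_nonneg hR]

theorem mem_extremePoints_of_mem_sphere [StrictConvexSpace ℝ E] {K : Set E} {c x : E} {R : ℝ}
    (hK : K ⊆ closedBall c R) (hx : x ∈ K) (hxR : x ∈ sphere c R) : x ∈ K.extremePoints ℝ := by
  refine ⟨hx, fun x₁ hx₁ x₂ hx₂ hseg => ?_⟩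
  rcases eq_or_ne x₁ x₂ with rfl | hne
  · rw [openSegment_same] at hseg; exact hseg.symm
  have hR : R ≠ 0 := by
    rintro rfl
    rw [closedBall_zero] at hK
    exact hne ((hK hx₁).trans (hK hx₂).symm)
  have := (strictConvex_closedBall ℝ c R).openSegment_subset (hK hx₁) (hK hx₂) hne hseg
  rw [interior_closedBall c hR, mem_ball] at this
  exact absurd (mem_sphere.1 hxR) this.ne

/-- Pigeonhole over the directions illuminating the points `c + δ • e`, `δ → 0`. -/
theorem TIlluminates.exists_isFeasibleDir {K : Set E} {ε : ℝ} {s : Finset E} {c e : E}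
    (hs : TIlluminates K ε s) (hK : Convex ℝ K) (hKc : IsClosed K) (hc : c ∈ K)
    (he : IsFeasibleDir K c e) : ∃ r ∈ s, c + ε • r ∈ K ∧ IsFeasibleDir K (c + ε • r) e := by
  obtain ⟨δ, hδ, hseg⟩ := he.exists_forall_add_smul_mem hK hc
  set A : E → Set ℝ := fun r => {t ∈ Ioc 0 δ | c + t • e + ε • r ∈ K}
  have hcover : Ioc 0 δ ⊆ ⋃ r ∈ s, A r := fun t ht => by
    obtain ⟨r, hr, hrK⟩ := hs _ (hseg t (Ioc_subset_Icc_self ht))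
    exact mem_biUnion hr ⟨ht, hrK⟩
  have h0 : (0 : ℝ) ∈ ⋃ r ∈ s, closure (A r) := by
    rw [← Finset.closure_biUnion]
    exact closure_mono hcover (by rw [closure_Ioc hδ.ne]; exact ⟨le_rfl, hδ.le⟩)
  obtain ⟨r, hr, hr0⟩ := mem_iUnion₂.1 h0
  obtain ⟨t, ht, htK⟩ := closure_nonempty_iff.1 ⟨0, hr0⟩
  refine ⟨r, hr, ?_, t, ht.1, by rwa [add_right_comm]⟩
  have hcont : Continuous fun t : ℝ => c + t • e + ε • r := by fun_prop
  simpa [hKc.closure_eq] using map_mem_closure hcont hr0 fun t ht => ht.2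

end NormedSpace

section InnerProductSpace

variable {E : Type*} [NormedAddCommGroup E] [InnerProductSpace ℝ E] {K : Set E} {x e : E}

theorem IsFeasibleDir.inner_nonpos {ν : E} (h : IsFeasibleDir K x e)
    (hν : ∀ y ∈ K, ⟪y - x, ν⟫ ≤ 0) : ⟪e, ν⟫ ≤ 0 := by
  obtain ⟨δ, hδ, hmem⟩ := h
  have := hν _ hmem
  rw [add_sub_cancel_left, real_inner_smul_left] at this
  exact nonpos_of_mul_nonpos_right this hδ

theorem IsFeasibleDir.inner_neg_of_mem_sphere {c : E} {R : ℝ}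
    (h : IsFeasibleDir (closedBall c R) x e) (hx : x ∈ sphere c R) (he : e ≠ 0) :
    ⟪x - c, e⟫ < 0 := by
  obtain ⟨δ, hδ, hmem⟩ := h
  rw [mem_sphere_iff_norm] at hx
  rw [mem_closedBall_iff_norm, show x + δ • e - c = (x - c) + δ • e by abel] at hmem
  have hsq : ‖(x - c) + δ • e‖ ^ 2 ≤ ‖x - c‖ ^ 2 := by
    rw [hx]; exact pow_le_pow_left₀ (norm_nonneg _) hmem 2
  rw [norm_add_sq_real, real_inner_smul_right, norm_smul, Real.norm_of_nonneg hδ.le] at hsq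
  have : 0 < δ * ‖e‖ := mul_pos hδ (norm_pos_iff.2 he)
  nlinarith

theorem interior_eq_empty_of_forall_inner_eq_zero {p ν : E} (hν : ν ≠ 0)
    (hK : ∀ y ∈ K, ⟪y - p, ν⟫ = 0) : interior K = ∅ := by
  refine eq_empty_of_forall_notMem fun z hz => ?_
  obtain ⟨δ, hδ, hmem⟩ := isFeasibleDir_of_mem_interior hz ν
  have h := hK _ hmem
  rw [add_sub_right_comm, inner_add_left, hK z (interior_subset hz), real_inner_smul_left,
    real_inner_self_eq_norm_sq, zero_add] at h
  exact (mul_pos hδ (by positivity)).ne' h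

theorem inner_sub_neg_of_mem_interior {ν z : E} (hν : ν ≠ 0) (hK : ∀ y ∈ K, ⟪y - x, ν⟫ ≤ 0)
    (hz : z ∈ interior K) : ⟪z - x, ν⟫ < 0 := by
  obtain ⟨δ, hδ, hmem⟩ := isFeasibleDir_of_mem_interior hz ν
  have h := hK _ hmem
  rw [add_sub_right_comm, inner_add_left, real_inner_smul_left, real_inner_self_eq_norm_sq] at h
  nlinarith [mul_pos hδ (by positivity : 0 < ‖ν‖ ^ 2)]

theorem exists_supporting_normal_of_notMem_interior [CompleteSpace E] (hK : Convex ℝ K)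
    (hKi : (interior K).Nonempty) (hx : x ∉ interior K) :
    ∃ ν ≠ 0, ∀ y ∈ K, ⟪y - x, ν⟫ ≤ 0 := by
  obtain ⟨f, hf⟩ := geometric_hahn_banach_open_point hK.interior isOpen_interior hx
  set ν := (InnerProductSpace.toDual ℝ E).symm f
  have hν : ∀ y, ⟪y, ν⟫ = f y := fun y => by
    rw [real_inner_comm]; exact InnerProductSpace.toDual_symm_apply
  obtain ⟨z, hz⟩ := hKi
  refine ⟨ν, fun h => (hf z hz).ne (by simp [← hν, h]), fun y hy => ?_⟩
  have hcl : closure (interior K) ⊆ {y | f y ≤ f x} :=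
    closure_minimal (fun z hz => (hf z hz).le) (isClosed_le f.continuous continuous_const)
  rw [hK.closure_interior_eq_closure_of_nonempty_interior ⟨z, hz⟩] at hcl
  rw [inner_sub_left, hν, hν, sub_nonpos]
  exact hcl (subset_closure hy)

theorem forall_inner_sub_nonpos_of_midpoint {p q ν : E} (hp : p ∈ K) (hq : q ∈ K)
    (h : ∀ y ∈ K, ⟪y - midpoint ℝ p q, ν⟫ ≤ 0) : ∀ y ∈ K, ⟪y - p, ν⟫ ≤ 0 := by
  have hsum : ⟪p - midpoint ℝ p q, ν⟫ + ⟪q - midpoint ℝ p q, ν⟫ = 0 := by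
    rw [← inner_add_left, sub_add_sub_comm, midpoint_add_self, sub_self, inner_zero_left]
  intro y hy
  have := h y hy
  have := h p hp
  have := h q hq
  rw [show y - p = (y - midpoint ℝ p q) - (p - midpoint ℝ p q) by abel, inner_sub_left]
  linarith

theorem exists_supporting_normal_of_segment_subset_frontier [CompleteSpace E] {p q : E}
    (hK : Convex ℝ K) (hint : (interior K).Nonempty) (hp : p ∈ K) (hq : q ∈ K)
    (hpq : segment ℝ p q ⊆ frontier K) :
    ∃ ν ≠ 0, (∀ y ∈ K, ⟪y - p, ν⟫ ≤ 0) ∧ ∀ y ∈ K, ⟪y - q, ν⟫ ≤ 0 := by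
  obtain ⟨ν, hν, hm⟩ := exists_supporting_normal_of_notMem_interior hK hint
    (hpq (midpoint_mem_segment (𝕜 := ℝ) p q)).2
  exact ⟨ν, hν, forall_inner_sub_nonpos_of_midpoint hp hq hm,
    forall_inner_sub_nonpos_of_midpoint hq hp (midpoint_comm (R := ℝ) p q ▸ hm)⟩

/-- Unless `ν'` is a negative multiple of `ν` (equality in Cauchy–Schwarz), the bisector
`‖ν'‖ • ν + ‖ν‖ • ν'` makes a positive inner product with both. -/
theorem exists_inner_pos_or_eq_neg_smul {ν ν' : E} (hν : ν ≠ 0) (hν' : ν' ≠ 0) :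
    (∃ e, 0 < ⟪e, ν⟫ ∧ 0 < ⟪e, ν'⟫) ∨ ∃ r : ℝ, r < 0 ∧ ν' = r • ν := by
  have hn : 0 < ‖ν‖ := norm_pos_iff.2 hν
  have hn' : 0 < ‖ν'‖ := norm_pos_iff.2 hν'
  by_cases h : ⟪-ν, ν'⟫ = ‖-ν‖ * ‖ν'‖
  · rw [inner_eq_norm_mul_iff_real, norm_neg] at h
    refine Or.inr ⟨-(‖ν'‖ / ‖ν‖), by simp only [Left.neg_neg_iff]; positivity, ?_⟩
    rw [neg_smul, ← smul_neg, div_eq_inv_mul, mul_smul, h, smul_smul, inv_mul_cancel₀ hn.ne',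
      one_smul]
  · have hlt : ⟪-ν, ν'⟫ < ‖ν‖ * ‖ν'‖ := by
      rw [norm_neg] at h; exact lt_of_le_of_ne (norm_neg ν ▸ real_inner_le_norm _ _) h
    rw [inner_neg_left] at hlt
    refine Or.inl ⟨‖ν'‖ • ν + ‖ν‖ • ν', ?_, ?_⟩ <;>
      simp only [inner_add_left, real_inner_smul_left, real_inner_self_eq_norm_sq,
        real_inner_comm ν ν'] <;> nlinarith

end InnerProductSpace

namespace IsCircumball

variable {n : ℕ} {K : Set (EuclideanSpace ℝ (Fin n))} {c : EuclideanSpace ℝ (Fin n)} {R : ℝ}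

theorem nonempty (h : IsCircumball K c R) : K.Nonempty := by
  by_contra hK
  have := h.2 c (R - 1) (by simp [not_nonempty_iff_eq_empty.1 hK])
  linarith

theorem radius_pos [NeZero n] (h : IsCircumball K c R) (hK : (interior K).Nonempty) : 0 < R := by
  obtain ⟨z, hz⟩ := hK
  obtain ⟨e, he⟩ := exists_ne (0 : EuclideanSpace ℝ (Fin n))
  obtain ⟨δ, hδ, hmem⟩ := isFeasibleDir_of_mem_interior hz e
  have htri := dist_triangle_right (z + δ • e) z c
  rw [dist_eq_norm, add_sub_cancel_left, norm_smul, Real.norm_of_nonneg hδ.le] at htri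
  linarith [mem_closedBall.1 (h.1 hmem), mem_closedBall.1 (h.1 (interior_subset hz)),
    mul_pos hδ (norm_pos_iff.2 he)]

theorem sq_le_of_forall_norm_sub_sq_le (h : IsCircumball K c R) {c' : EuclideanSpace ℝ (Fin n)}
    {ρ : ℝ} (hρ : ∀ y ∈ K, ‖y - c'‖ ^ 2 ≤ ρ) : R ^ 2 ≤ ρ := by
  obtain ⟨y, hy⟩ := h.nonempty
  have hρ0 : 0 ≤ ρ := (sq_nonneg _).trans (hρ y hy)
  have hR0 : 0 ≤ R := dist_nonneg.trans (h.1 hy)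
  have hball : K ⊆ closedBall c' √ρ := fun y hy =>
    mem_closedBall_iff_norm.2 (Real.le_sqrt_of_sq_le (hρ y hy))
  calc R ^ 2 ≤ √ρ ^ 2 := pow_le_pow_left₀ hR0 (h.2 _ _ hball) 2
    _ = ρ := Real.sq_sqrt hρ0

/-- Otherwise the nearest point `p` of `K` to `c` would be the centre of a smaller ball. -/
theorem center_mem_s19 (h : IsCircumball K c R) (hK : Convex ℝ K) (hKc : IsClosed K) : c ∈ K := by
  by_contra hc
  obtain ⟨p, hp, hpmin⟩ :=
    exists_norm_eq_iInf_of_complete_convex h.nonempty hKc.isComplete hK c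
  have hproj := (norm_eq_iInf_iff_real_inner_le_zero hK hp).1 hpmin
  have hcp : 0 < ‖c - p‖ := norm_pos_iff.2 (sub_ne_zero.2 fun h => hc (h ▸ hp))
  have hρ : ∀ y ∈ K, ‖y - p‖ ^ 2 ≤ R ^ 2 - ‖c - p‖ ^ 2 := fun y hy => by
    have hyc : ‖y - c‖ ≤ R := mem_closedBall_iff_norm.1 (h.1 hy)
    have hexp : ‖y - p‖ ^ 2 = ‖y - c‖ ^ 2 + 2 * ⟪c - p, y - p⟫ - ‖c - p‖ ^ 2 := by
      rw [show y - p = (y - c) + (c - p) by abel, norm_add_sq_real, inner_add_right,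
        real_inner_self_eq_norm_sq, real_inner_comm]
      ring
    nlinarith [hproj y hy, norm_nonneg (y - c)]
  nlinarith [h.sq_le_of_forall_norm_sub_sq_le hρ]

/-- Moving the centre slightly along `w` would give a smaller ball. -/
theorem not_forall_le_inner (h : IsCircumball K c R) (hK : IsCompact K) (hR : 0 < R)
    {w : EuclideanSpace ℝ (Fin n)} {δ : ℝ} (hδ : 0 < δ) :
    ¬ ∀ t ∈ K ∩ sphere c R, δ ≤ ⟪t - c, w⟫ := by
  intro hT
  set F := {y ∈ K | ⟪y - c, w⟫ ≤ δ / 2}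
  have hF : IsCompact F :=
    hK.inter_right (isClosed_le (f := fun y => ⟪y - c, w⟫) (by fun_prop) continuous_const)
  obtain ⟨M, hM0, hMR, hM⟩ := hF.exists_forall_norm_sub_le_lt hR fun y hy => by
    refine lt_of_le_of_ne (mem_closedBall_iff_norm.1 (h.1 hy.1)) fun hyR => ?_
    linarith [hT y ⟨hy.1, mem_sphere_iff_norm.2 hyR⟩, hy.2]
  set ε := min ((R - M) / (2 * (‖w‖ + 1))) (δ / (2 * (‖w‖ ^ 2 + 1)))
  have hε : 0 < ε := lt_min (div_pos (by linarith) (by positivity)) (div_pos hδ (by positivity))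
  have hεw : ε * ‖w‖ ≤ (R - M) / 2 := by
    have := (le_div_iff₀ (by positivity)).1 (min_le_left _ _ : ε ≤ _)
    nlinarith [norm_nonneg w]
  have hεw2 : ε * ‖w‖ ^ 2 ≤ δ / 2 := by
    have := (le_div_iff₀ (by positivity)).1 (min_le_right _ _ : ε ≤ _)
    nlinarith
  have hbound : ∀ y ∈ K,
      ‖y - (c + ε • w)‖ ^ 2 ≤ max (((R + M) / 2) ^ 2) (R ^ 2 - ε * δ / 2) := by
    intro y hy
    rw [sub_add_eq_sub_sub]
    by_cases hyF : ⟪y - c, w⟫ ≤ δ / 2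
    · refine le_max_of_le_left (pow_le_pow_left₀ (norm_nonneg _) ?_ 2)
      calc ‖y - c - ε • w‖ ≤ ‖y - c‖ + ε * ‖w‖ := by
            simpa [norm_smul, Real.norm_of_nonneg hε.le] using norm_sub_le (y - c) (ε • w)
        _ ≤ (R + M) / 2 := by linarith [hM y ⟨hy, hyF⟩]
    · refine le_max_of_le_right ?_
      rw [norm_sub_sq_real, real_inner_smul_right, norm_smul, Real.norm_of_nonneg hε.le]
      have hyR := mem_closedBall_iff_norm.1 (h.1 hy)
      nlinarith [norm_nonneg (y - c)]
  refine (max_lt ?_ ?_).not_ge (h.sq_le_of_forall_norm_sub_sq_le hbound)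
  · exact pow_lt_pow_left₀ (by linarith) (by linarith) two_ne_zero
  · nlinarith

theorem center_mem_convexHull_inter_sphere (h : IsCircumball K c R) (hK : IsCompact K)
    (hR : 0 < R) (hT : (K ∩ sphere c R).Finite) : c ∈ convexHull ℝ (K ∩ sphere c R) := by
  by_contra hc
  obtain ⟨f, u, hfc, hf⟩ :=
    geometric_hahn_banach_point_closed (convex_convexHull ℝ _) (hT.isClosed_convexHull (𝕜 := ℝ))
      hc
  have hw : ∀ y, ⟪y, (InnerProductSpace.toDual ℝ _).symm f⟫ = f y := fun y => by
    rw [real_inner_comm]; exact InnerProductSpace.toDual_symm_apply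
  refine h.not_forall_le_inner hK hR (w := (InnerProductSpace.toDual ℝ _).symm f) (sub_pos.2 hfc)
    fun t ht => ?_
  rw [inner_sub_left, hw, hw]
  linarith [hf t (subset_convexHull ℝ _ ht)]

end IsCircumball

section Planar

variable {E : Type*} [NormedAddCommGroup E] [InnerProductSpace ℝ E] [Fact (finrank ℝ E = 2)]
  {K T : Set E} {c n u : E}

theorem exists_ne_zero_inner_eq_zero (w : E) : ∃ ν ≠ 0, ⟪w, ν⟫ = 0 := by
  have : FiniteDimensional ℝ E := .of_fact_finrank_eq_succ 1
  have : Nontrivial E := nontrivial_of_finrank_eq_succ (Fact.out : finrank ℝ E = 2)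
  rcases eq_or_ne w 0 with rfl | hw
  · obtain ⟨ν, hν⟩ := exists_ne (0 : E)
    exact ⟨ν, hν, inner_zero_left ν⟩
  have hrank := Submodule.finrank_orthogonal_span_singleton (𝕜 := ℝ) (n := 1) hw
  obtain ⟨ν, hνmem, hν⟩ := Submodule.exists_mem_ne_zero_of_ne_bot
    (Submodule.one_le_finrank_iff.1 hrank.ge)
  exact ⟨ν, hν, Submodule.mem_orthogonal_singleton_iff_inner_right.1 hνmem⟩

theorem exists_smul_eq_of_inner_eq_zero {ν x y : E} (hν : ν ≠ 0) (hx : x ≠ 0)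
    (hνx : ⟪ν, x⟫ = 0) (hνy : ⟪ν, y⟫ = 0) : ∃ μ : ℝ, y = μ • x := by
  obtain ⟨μ, hμ⟩ := Submodule.mem_span_singleton.1
    (Submodule.mem_span_singleton_of_inner_eq_zero_of_inner_eq_zero hν hx hνy hνx)
  exact ⟨μ, hμ.symm⟩

/-- `n` is a positive multiple of `w - β • u` for a suitable `β`. -/
theorem IsFeasibleDir.of_inner_pos (hK : Convex ℝ K) (hc : c ∈ K) (hn : n ≠ 0) (hu : u ≠ 0)
    (hun : ⟪u, n⟫ = 0) (hfwd : IsFeasibleDir K c u) (hbwd : IsFeasibleDir K c (-u)) {w : E}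
    (hw : IsFeasibleDir K c w) (hwn : 0 < ⟪w, n⟫) : IsFeasibleDir K c n := by
  set β := ⟪u, w⟫ / ‖u‖ ^ 2
  have hu2 : ‖u‖ ^ 2 ≠ 0 := by positivity
  have hperp : ⟪u, w - β • u⟫ = 0 := by
    rw [inner_sub_right, real_inner_smul_right, real_inner_self_eq_norm_sq,
      div_mul_cancel₀ _ hu2, sub_self]
  obtain ⟨μ, hμ⟩ := exists_smul_eq_of_inner_eq_zero hu hn (real_inner_comm n u ▸ hun) hperp
  have hμ0 : 0 < μ := by
    have : ⟪w - β • u, n⟫ = ⟪w, n⟫ := by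
      rw [inner_sub_left, real_inner_smul_left, hun, mul_zero, sub_zero]
    rw [← this, hμ, real_inner_smul_left, real_inner_self_eq_norm_sq] at hwn
    exact pos_of_mul_pos_left hwn (by positivity)
  have hwβ : IsFeasibleDir K c (w - β • u) := by
    rw [sub_eq_add_neg, ← neg_smul]
    exact hw.add hK hc (IsFeasibleDir.smul_of_isFeasibleDir_neg hc hfwd hbwd _)
  simpa [hμ, smul_smul, hμ0.ne'] using hwβ.smul (inv_pos.2 hμ0)

/-- A point `c` of the convex hull of `T`, with `T` on one side of the line through `c` normal
to `n`, is flanked on that line by points of `T` on both sides. -/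
theorem exists_isFeasibleDir_of_mem_convexHull (hTK : T ⊆ K) (hc : c ∈ convexHull ℝ T)
    (hcT : c ∉ T) (hn : n ≠ 0) (hT : ∀ t ∈ T, 0 ≤ ⟪t - c, n⟫) :
    ∃ u ≠ 0, ⟪u, n⟫ = 0 ∧ IsFeasibleDir K c u ∧ IsFeasibleDir K c (-u) := by
  set S := {t ∈ T | innerₛₗ ℝ n t = innerₛₗ ℝ n c}
  have hcS : c ∈ convexHull ℝ S := mem_convexHull_setOf_eq_of_le _ hc fun t ht => by
    simpa [innerₛₗ_apply_apply, inner_sub_right, real_inner_comm] using hT t ht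
  have hS : ∀ t ∈ S, ⟪t - c, n⟫ = 0 := fun t ht => by
    rw [real_inner_comm, inner_sub_right, ← innerₛₗ_apply_apply ℝ n t, ht.2,
      innerₛₗ_apply_apply, sub_self]
  obtain ⟨t₁, ht₁⟩ := convexHull_nonempty_iff.1 ⟨c, hcS⟩
  have hu : t₁ - c ≠ 0 := sub_ne_zero.2 fun h => hcT (h ▸ ht₁.1)
  have hline : ∀ t ∈ S, ∃ μ : ℝ, t - c = μ • (t₁ - c) := fun t ht =>
    exists_smul_eq_of_inner_eq_zero hn hu (by rw [real_inner_comm, hS t₁ ht₁])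
      (by rw [real_inner_comm, hS t ht])
  refine ⟨t₁ - c, hu, hS t₁ ht₁, isFeasibleDir_sub (hTK ht₁.1), ?_⟩
  by_cases hside : ∀ t ∈ S, innerₛₗ ℝ (t₁ - c) c ≤ innerₛₗ ℝ (t₁ - c) t
  · obtain ⟨t, ht, hteq⟩ :=
      convexHull_nonempty_iff.1 ⟨c, mem_convexHull_setOf_eq_of_le _ hcS hside⟩
    obtain ⟨μ, hμ⟩ := hline t ht
    rw [← sub_eq_zero, ← map_sub, innerₛₗ_apply_apply, hμ, real_inner_smul_right,
      real_inner_self_eq_norm_sq, mul_eq_zero] at hteq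
    have : μ = 0 := hteq.resolve_right (by positivity)
    exact absurd ((sub_eq_zero.1 (by simpa [this] using hμ)) ▸ ht.1) hcT
  push Not at hside
  obtain ⟨t, ht, hlt⟩ := hside
  obtain ⟨μ, hμ⟩ := hline t ht
  rw [← sub_neg, ← map_sub, innerₛₗ_apply_apply, hμ, real_inner_smul_right,
    real_inner_self_eq_norm_sq] at hlt
  have hμ0 : μ < 0 := neg_of_mul_neg_left hlt (by positivity)
  have hback : (-μ)⁻¹ • (t - c) = -(t₁ - c) := by
    rw [hμ, smul_smul, inv_neg, neg_mul, inv_mul_cancel₀ hμ0.ne, neg_one_smul]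
  exact hback ▸ (isFeasibleDir_sub (hTK ht.1)).smul (inv_pos.2 (neg_pos.2 hμ0))

end Planar

instance : Fact (finrank ℝ (EuclideanSpace ℝ (Fin 2)) = 2) := ⟨finrank_euclideanSpace_fin⟩

/-- Otherwise the inner normal `-ν` of a supporting line at `c` is a feasible direction at `c`;
illumination transports it to a point of `K` on the circumsphere, where it must point into the
ball, contradicting the support property. -/
theorem IsCircumball.center_mem_interior {K : Set (EuclideanSpace ℝ (Fin 2))}
    {c : EuclideanSpace ℝ (Fin 2)} {R : ℝ} {s : Finset (EuclideanSpace ℝ (Fin 2))}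
    (h : IsCircumball K c R) (hK : Convex ℝ K) (hKc : IsCompact K) (hint : (interior K).Nonempty)
    (hT : (K ∩ sphere c R).Finite) (hs : TIlluminates K R s) (hunit : ∀ r ∈ s, ‖r‖ = 1) :
    c ∈ interior K := by
  by_contra hc
  have hR := h.radius_pos hint
  have hcK := h.center_mem_s19 hK hKc.isClosed
  obtain ⟨ν, hν, hsupp⟩ := exists_supporting_normal_of_notMem_interior hK hint hc
  have hsupp' : ∀ y ∈ K, 0 ≤ ⟪y - c, -ν⟫ := fun y hy => by
    rw [inner_neg_right, neg_nonneg]; exact hsupp y hy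
  obtain ⟨z, hz⟩ := hint
  have hcT : c ∉ K ∩ sphere c R := fun hc' => by simp [hR.ne] at hc'
  obtain ⟨u, hu, hun, hfwd, hbwd⟩ := exists_isFeasibleDir_of_mem_convexHull inter_subset_left
    (h.center_mem_convexHull_inter_sphere hKc hR hT) hcT (neg_ne_zero.2 hν)
    fun t ht => hsupp' t ht.1
  have hn : IsFeasibleDir K c (-ν) :=
    .of_inner_pos hK hcK (neg_ne_zero.2 hν) hu hun hfwd hbwd
      (isFeasibleDir_sub (interior_subset hz))
      (by rw [inner_neg_right]; exact neg_pos.2 (inner_sub_neg_of_mem_interior hν hsupp hz))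
  obtain ⟨r, hr, htK, htn⟩ := hs.exists_isFeasibleDir hK hKc.isClosed hcK hn
  exact (hsupp' _ htK).not_gt ((htn.mono h.1).inner_neg_of_mem_sphere
    (add_smul_mem_sphere hR.le (hunit r hr)) (neg_ne_zero.2 hν))

theorem Fin.eq_or_eq_add_of_four (i j : Fin 4) : j = i ∨ j = i + 1 ∨ j = i + 2 ∨ j = i + 3 := by
  omega

section Quadrangle

variable {E : Type*} [NormedAddCommGroup E] [InnerProductSpace ℝ E] {v : Fin 4 → E}

def IsRectangle (v : Fin 4 → E) : Prop := ∀ i : Fin 4, ⟪v (i + 1) - v i, v (i - 1) - v i⟫ = 0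

theorem inner_sub_sub_eq_zero_of_add_eq_add {a b c d o : E} {R : ℝ} (h : a + c = b + d)
    (ha : ‖a - o‖ = R) (hb : ‖b - o‖ = R) (hc : ‖c - o‖ = R) (hd : ‖d - o‖ = R) :
    ⟪b - a, d - a⟫ = 0 := by
  have hd' : d - o = (a - o) - (b - o) + (c - o) := by rw [eq_sub_of_add_eq' h.symm]; abel
  rw [show d - a = (c - o) - (b - o) by rw [eq_sub_of_add_eq' h.symm]; abel,
    show b - a = (b - o) - (a - o) by abel]
  rw [hd'] at hd
  generalize a - o = x, b - o = y, c - o = z at *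
  have hsq : ⟪x - y + z, x - y + z⟫ = ⟪x, x⟫ := by
    rw [real_inner_self_eq_norm_sq, real_inner_self_eq_norm_sq, hd, ha]
  have hy : ⟪y, y⟫ = ⟪x, x⟫ := by simp only [real_inner_self_eq_norm_sq, hb, ha]
  have hz : ⟪z, z⟫ = ⟪x, x⟫ := by simp only [real_inner_self_eq_norm_sq, hc, ha]
  simp only [inner_sub_left, inner_sub_right, inner_add_left, inner_add_right] at hsq ⊢
  rw [real_inner_comm x y, real_inner_comm x z, real_inner_comm y z] at hsq
  linarith

theorem isRectangle_of_add_eq_add {o : E} {R : ℝ} (hpar : v 0 + v 2 = v 1 + v 3)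
    (hv : ∀ i, ‖v i - o‖ = R) : IsRectangle v := by
  intro i
  refine inner_sub_sub_eq_zero_of_add_eq_add (c := v (i + 2)) ?_ (hv _) (hv _) (hv _) (hv _)
  fin_cases i
  · exact hpar
  · show v 1 + v 3 = v 2 + v 0
    rw [← hpar, add_comm]
  · show v 2 + v 0 = v 3 + v 1
    rw [add_comm, hpar, add_comm]
  · show v 3 + v 1 = v 0 + v 2
    rw [add_comm, hpar]

/-- Two consecutive right angles over a degenerate edge collapse the opposite edge too, leaving a
segment. -/
theorem IsRectangle.add_one_ne [Fact (finrank ℝ E = 2)] (h : IsRectangle v)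
    (hint : (interior (convexHull ℝ (range v))).Nonempty) (i : Fin 4) : v (i + 1) ≠ v i := by
  intro hi
  have h₂ := h (i + 2)
  have h₃ := h (i + 3)
  rw [show i + 2 + 1 = i + 3 by omega, show i + 2 - 1 = i + 1 by omega, hi] at h₂
  rw [show i + 3 + 1 = i by omega, show i + 3 - 1 = i + 2 by omega] at h₃
  have h₃₂ : v (i + 3) = v (i + 2) := by
    rw [show v i - v (i + 3) = (v i - v (i + 2)) - (v (i + 3) - v (i + 2)) by abel,
      show v (i + 2) - v (i + 3) = -(v (i + 3) - v (i + 2)) by abel, inner_neg_right,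
      inner_sub_left, real_inner_comm, h₂, zero_sub, neg_neg] at h₃
    exact sub_eq_zero.1 (inner_self_eq_zero.1 h₃)
  have hseg : range v ⊆ segment ℝ (v i) (v (i + 2)) := by
    rintro _ ⟨j, rfl⟩
    rcases Fin.eq_or_eq_add_of_four i j with rfl | rfl | rfl | rfl
    · exact left_mem_segment ℝ _ _
    · exact hi ▸ left_mem_segment ℝ _ _
    · exact right_mem_segment ℝ _ _
    · exact h₃₂ ▸ right_mem_segment ℝ _ _
  obtain ⟨ν, hν, hperp⟩ := exists_ne_zero_inner_eq_zero (v (i + 2) - v i)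
  refine hint.ne_empty (interior_eq_empty_of_forall_inner_eq_zero (p := v i) hν fun y hy => ?_)
  obtain ⟨θ, -, rfl⟩ := segment_eq_image' ℝ (v i) (v (i + 2)) ▸
    convexHull_min hseg (convex_segment _ _) hy
  rw [add_sub_cancel_left, real_inner_smul_left, hperp, mul_zero]

theorem IsRectangle.add_eq_add [Fact (finrank ℝ E = 2)] (h : IsRectangle v)
    (hint : (interior (convexHull ℝ (range v))).Nonempty) : v 0 + v 2 = v 1 + v 3 := by
  have hA : v 1 - v 0 ≠ 0 := sub_ne_zero.2 (h.add_one_ne hint 0)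
  have hB : v 3 - v 0 ≠ 0 := sub_ne_zero.2 (h.add_one_ne hint 3).symm
  have h₀ : ⟪v 1 - v 0, v 3 - v 0⟫ = 0 := h 0
  have h₁ : ⟪v 2 - v 1, v 0 - v 1⟫ = 0 := h 1
  have h₃ : ⟪v 0 - v 3, v 2 - v 3⟫ = 0 := h 3
  have hAw : ⟪v 1 - v 0, v 0 + v 2 - (v 1 + v 3)⟫ = 0 := by
    rw [show v 0 + v 2 - (v 1 + v 3) = (v 2 - v 1) - (v 3 - v 0) by abel, inner_sub_right, h₀,
      ← neg_sub (v 0), inner_neg_left, real_inner_comm, h₁]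
    simp
  have hBw : ⟪v 3 - v 0, v 0 + v 2 - (v 1 + v 3)⟫ = 0 := by
    rw [show v 0 + v 2 - (v 1 + v 3) = (v 2 - v 3) - (v 1 - v 0) by abel, inner_sub_right,
      real_inner_comm (v 1 - v 0), h₀, ← neg_sub (v 0), inner_neg_left, h₃]
    simp
  obtain ⟨μ, hμ⟩ := exists_smul_eq_of_inner_eq_zero hA hB h₀ hAw
  rw [hμ, real_inner_smul_right, real_inner_self_eq_norm_sq, mul_eq_zero] at hBw
  rw [← sub_eq_zero, hμ, hBw.resolve_right (by positivity), zero_smul]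

structure IsOuterEdgeNormals (v ν : Fin 4 → E) : Prop where
  ne_zero : ∀ k, ν k ≠ 0
  support_left : ∀ k, ∀ y ∈ convexHull ℝ (range v), ⟪y - v k, ν k⟫ ≤ 0
  support_right : ∀ k, ∀ y ∈ convexHull ℝ (range v), ⟪y - v (k + 1), ν k⟫ ≤ 0

theorem exists_isOuterEdgeNormals [CompleteSpace E]
    (hint : (interior (convexHull ℝ (range v))).Nonempty)
    (hcyc : ∀ i : Fin 4, segment ℝ (v i) (v (i + 1)) ⊆ frontier (convexHull ℝ (range v))) :
    ∃ ν, IsOuterEdgeNormals v ν := by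
  have hvQ : ∀ i, v i ∈ convexHull ℝ (range v) := fun i => subset_convexHull ℝ _ (mem_range_self i)
  choose ν hν hl hr using fun k => exists_supporting_normal_of_segment_subset_frontier
    (convex_convexHull ℝ _) hint (hvQ k) (hvQ (k + 1)) (hcyc k)
  exact ⟨ν, ⟨hν, hl, hr⟩⟩

namespace IsOuterEdgeNormals

variable {ν : Fin 4 → E}

theorem inner_edge (hν : IsOuterEdgeNormals v ν) (k : Fin 4) : ⟪v (k + 1) - v k, ν k⟫ = 0 := by
  have hvQ : ∀ i, v i ∈ convexHull ℝ (range v) := fun i => subset_convexHull ℝ _ (mem_range_self i)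
  have h₁ := hν.support_left k _ (hvQ (k + 1))
  have h₂ := hν.support_right k _ (hvQ k)
  rw [← neg_sub, inner_neg_left] at h₂
  linarith

theorem not_isFeasibleDir (hν : IsOuterEdgeNormals v ν) {e : E} {k : Fin 4} (he : 0 < ⟪e, ν k⟫) :
    ¬ IsFeasibleDir (convexHull ℝ (range v)) (v k) e ∧
      ¬ IsFeasibleDir (convexHull ℝ (range v)) (v (k + 1)) e :=
  ⟨fun h => (h.inner_nonpos (hν.support_left k)).not_gt he,
    fun h => (h.inner_nonpos (hν.support_right k)).not_gt he⟩

/-- Adjacent edge normals are never opposite, as the quadrangle would then lie on a line. -/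
theorem exists_inner_pos_succ (hν : IsOuterEdgeNormals v ν)
    (hint : (interior (convexHull ℝ (range v))).Nonempty) (k : Fin 4) :
    ∃ e, 0 < ⟪e, ν k⟫ ∧ 0 < ⟪e, ν (k + 1)⟫ := by
  refine (exists_inner_pos_or_eq_neg_smul (hν.ne_zero k) (hν.ne_zero (k + 1))).resolve_right ?_
  rintro ⟨r, hr, hrν⟩
  refine hint.ne_empty (interior_eq_empty_of_forall_inner_eq_zero (p := v (k + 1))
    (hν.ne_zero k) fun y hy => le_antisymm (hν.support_right k y hy) ?_)
  have := hν.support_left (k + 1) y hy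
  rw [hrν, real_inner_smul_right] at this
  exact nonneg_of_mul_nonpos_right this hr

/-- A direction crossing both edges `k` and `k + 2` outwards would be feasible at no vertex. -/
theorem exists_eq_neg_smul_add_two (hν : IsOuterEdgeNormals v ν)
    (hfeas : ∀ e, ∃ j, IsFeasibleDir (convexHull ℝ (range v)) (v j) e) (k : Fin 4) :
    ∃ r : ℝ, r < 0 ∧ ν (k + 2) = r • ν k := by
  refine (exists_inner_pos_or_eq_neg_smul (hν.ne_zero k) (hν.ne_zero (k + 2))).resolve_left ?_
  rintro ⟨e, he, he₂⟩
  obtain ⟨j, hj⟩ := hfeas e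
  rcases Fin.eq_or_eq_add_of_four k j with rfl | rfl | rfl | rfl
  · exact (hν.not_isFeasibleDir he).1 hj
  · exact (hν.not_isFeasibleDir he).2 hj
  · exact (hν.not_isFeasibleDir he₂).1 hj
  · exact (hν.not_isFeasibleDir he₂).2 (by rwa [show k + 2 + 1 = k + 3 by omega])

theorem mem_of_forall_exists_isFeasibleDir (hν : IsOuterEdgeNormals v ν)
    (hint : (interior (convexHull ℝ (range v))).Nonempty) {S : Set E}
    (hfeas : ∀ e, ∃ j, v j ∈ S ∧ IsFeasibleDir (convexHull ℝ (range v)) (v j) e) (j : Fin 4) :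
    v j ∈ S := by
  obtain ⟨e, he₁, he₂⟩ := hν.exists_inner_pos_succ hint (j + 1)
  obtain ⟨i, hiS, hi⟩ := hfeas e
  rcases Fin.eq_or_eq_add_of_four j i with rfl | rfl | rfl | rfl
  · exact hiS
  · exact absurd hi (hν.not_isFeasibleDir he₁).1
  · exact absurd (by rwa [show j + 2 = j + 1 + 1 by omega] at hi) (hν.not_isFeasibleDir he₁).2
  · exact absurd (by rwa [show j + 3 = j + 1 + 1 + 1 by omega] at hi) (hν.not_isFeasibleDir he₂).2

/-- Opposite edges are parallel, and the two directions of edges are independent. -/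
theorem add_eq_add [Fact (finrank ℝ E = 2)] (hν : IsOuterEdgeNormals v ν)
    (hint : (interior (convexHull ℝ (range v))).Nonempty)
    (hfeas : ∀ e, ∃ j, IsFeasibleDir (convexHull ℝ (range v)) (v j) e) :
    v 0 + v 2 = v 1 + v 3 := by
  obtain ⟨r₀, hr₀, hν₂⟩ := hν.exists_eq_neg_smul_add_two hfeas 0
  obtain ⟨r₁, hr₁, hν₃⟩ := hν.exists_eq_neg_smul_add_two hfeas 1
  have hperp : ∀ k : Fin 4, ∀ r : ℝ, r ≠ 0 → ν (k + 2) = r • ν k →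
      ⟪v k + v (k + 2) - v (k + 1) - v (k + 3), ν k⟫ = 0 := fun k r hr hνr => by
    have h₂ := hν.inner_edge (k + 2)
    rw [hνr, real_inner_smul_right, mul_eq_zero, show k + 2 + 1 = k + 3 by omega] at h₂
    rw [show v k + v (k + 2) - v (k + 1) - v (k + 3)
        = -(v (k + 1) - v k) - (v (k + 3) - v (k + 2)) by abel,
      inner_sub_left, inner_neg_left, hν.inner_edge k, h₂.resolve_left hr]
    simp
  have h₀ : ⟪v 0 + v 2 - (v 1 + v 3), ν 0⟫ = 0 := by
    simpa [sub_sub] using hperp 0 r₀ hr₀.ne hν₂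
  have h₁ : ⟪v 0 + v 2 - (v 1 + v 3), ν 1⟫ = 0 := by
    have h := hperp 1 r₁ hr₁.ne hν₃
    simp only [show (1 : Fin 4) + 2 = 3 by rfl, show (1 : Fin 4) + 1 = 2 by rfl,
      show (1 : Fin 4) + 3 = 0 by rfl] at h
    rw [show v 0 + v 2 - (v 1 + v 3) = -(v 1 + v 3 - v 2 - v 0) by abel, inner_neg_left, h,
      neg_zero]
  by_contra hw
  obtain ⟨β, hβ⟩ := exists_smul_eq_of_inner_eq_zero (sub_ne_zero.2 hw) (hν.ne_zero 0) h₀ h₁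
  obtain ⟨e, he₀, he₁⟩ := hν.exists_inner_pos_succ hint 0
  obtain ⟨e', he₃, he₀'⟩ := hν.exists_inner_pos_succ hint 3
  simp only [zero_add, show (3 : Fin 4) + 1 = 0 by rfl] at he₁ he₀'
  simp only [show (1 : Fin 4) + 2 = 3 by rfl] at hν₃
  rw [hβ, real_inner_smul_right] at he₁
  rw [hν₃, hβ, smul_smul, real_inner_smul_right] at he₃
  have hβ0 : 0 < β := pos_of_mul_pos_left he₁ he₀.le
  nlinarith [mul_pos (mul_pos (neg_pos.2 hr₁) hβ0) he₀']

end IsOuterEdgeNormals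

theorem isRectangle_of_forall_exists_isFeasibleDir [Fact (finrank ℝ E = 2)]
    (hint : (interior (convexHull ℝ (range v))).Nonempty)
    (hcyc : ∀ i : Fin 4, segment ℝ (v i) (v (i + 1)) ⊆ frontier (convexHull ℝ (range v)))
    {c : E} {R : ℝ}
    (hfeas : ∀ e, ∃ j, v j ∈ sphere c R ∧ IsFeasibleDir (convexHull ℝ (range v)) (v j) e) :
    IsRectangle v := by
  have : FiniteDimensional ℝ E := .of_fact_finrank_eq_succ 1
  obtain ⟨ν, hν⟩ := exists_isOuterEdgeNormals hint hcyc
  exact isRectangle_of_add_eq_add (hν.add_eq_add hint fun e => (hfeas e).imp fun _ h => h.2)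
    fun i => mem_sphere_iff_norm.1 (hν.mem_of_forall_exists_isFeasibleDir hint hfeas i)

end Quadrangle

theorem isRectangle_of_tIlluminates {v : Fin 4 → EuclideanSpace ℝ (Fin 2)}
    {c : EuclideanSpace ℝ (Fin 2)} {R : ℝ} {s : Finset (EuclideanSpace ℝ (Fin 2))}
    (hint : (interior (convexHull ℝ (range v))).Nonempty)
    (hcyc : ∀ i : Fin 4, segment ℝ (v i) (v (i + 1)) ⊆ frontier (convexHull ℝ (range v)))
    (hcirc : IsCircumball (convexHull ℝ (range v)) c R)
    (hs : TIlluminates (convexHull ℝ (range v)) R s) (hunit : ∀ r ∈ s, ‖r‖ = 1) :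
    IsRectangle v := by
  have hQ : Convex ℝ (convexHull ℝ (range v)) := convex_convexHull ℝ _
  have hQc : IsCompact (convexHull ℝ (range v)) := (finite_range v).isCompact_convexHull (𝕜 := ℝ)
  have hR := hcirc.radius_pos hint
  have hcontact : convexHull ℝ (range v) ∩ sphere c R ⊆ range v := fun t ht =>
    extremePoints_convexHull_subset (mem_extremePoints_of_mem_sphere hcirc.1 ht.1 ht.2)
  have hc := hcirc.center_mem_interior hQ hQc hint ((finite_range v).subset hcontact) hs hunit
  refine isRectangle_of_forall_exists_isFeasibleDir hint hcyc (c := c) (R := R) fun e => ?_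
  obtain ⟨r, hr, htQ, hte⟩ := hs.exists_isFeasibleDir hQ hQc.isClosed (interior_subset hc)
    (isFeasibleDir_of_mem_interior hc e)
  have ht := add_smul_mem_sphere (c := c) hR.le (hunit r hr)
  obtain ⟨j, hj⟩ := hcontact ⟨htQ, ht⟩
  exact ⟨j, hj ▸ ht, hj ▸ hte⟩

section Parallelogram

variable {E : Type*} [AddCommGroup E] [Module ℝ E]

def parallelogram (p A B : E) : Set E :=
  {x | ∃ s ∈ Icc (0 : ℝ) 1, ∃ t ∈ Icc (0 : ℝ) 1, x = p + s • A + t • B}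

theorem convexHull_range_eq_parallelogram {v : Fin 4 → E} (hpar : v 0 + v 2 = v 1 + v 3) :
    convexHull ℝ (range v) = parallelogram (v 0) (v 1 - v 0) (v 3 - v 0) := by
  have hv₂ : v 2 = v 0 + (1 : ℝ) • (v 1 - v 0) + (1 : ℝ) • (v 3 - v 0) := by
    rw [eq_sub_of_add_eq' hpar]; module
  have h₀ : (0 : ℝ) ∈ Icc (0 : ℝ) 1 := ⟨le_rfl, zero_le_one⟩
  have h₁ : (1 : ℝ) ∈ Icc (0 : ℝ) 1 := ⟨zero_le_one, le_rfl⟩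
  apply subset_antisymm
  · refine convexHull_min ?_ ?_
    · rintro _ ⟨i, rfl⟩
      fin_cases i
      · exact ⟨0, h₀, 0, h₀, by simp⟩
      · exact ⟨1, h₁, 0, h₀, by simp⟩
      · exact ⟨1, h₁, 1, h₁, hv₂⟩
      · exact ⟨0, h₀, 1, h₁, by simp⟩
    · rintro _ ⟨s, hs, t, ht, rfl⟩ _ ⟨s', hs', t', ht', rfl⟩ a b ha hb hab
      refine ⟨a • s + b • s', convex_Icc 0 1 hs hs' ha hb hab, a • t + b • t',
        convex_Icc 0 1 ht ht' ha hb hab, ?_⟩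
      rw [eq_sub_of_add_eq hab]
      simp only [smul_eq_mul]
      module
  · rintro _ ⟨s, hs, t, ht, rfl⟩
    have hv : ∀ i, v i ∈ convexHull ℝ (range v) := fun i => subset_convexHull ℝ _ (mem_range_self i)
    have hconv := convex_convexHull ℝ (range v)
    have hbot := hconv (hv 0) (hv 1) (sub_nonneg.2 hs.2) hs.1 (sub_add_cancel 1 s)
    have htop := hconv (hv 3) (hv 2) (sub_nonneg.2 hs.2) hs.1 (sub_add_cancel 1 s)
    convert hconv hbot htop (sub_nonneg.2 ht.2) ht.1 (sub_add_cancel 1 t) using 1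
    rw [hv₂]
    module

theorem parallelogram_eq_convexHull (p A B : E) :
    parallelogram p A B = convexHull ℝ (range ![p, p + A, p + A + B, p + B]) := by
  rw [convexHull_range_eq_parallelogram (by simp; abel)]
  simp

theorem convex_parallelogram (p A B : E) : Convex ℝ (parallelogram p A B) :=
  parallelogram_eq_convexHull p A B ▸ convex_convexHull ℝ _

end Parallelogram

theorem isClosed_parallelogram {E : Type*} [NormedAddCommGroup E] [NormedSpace ℝ E]
    (p A B : E) : IsClosed (parallelogram p A B) :=
  parallelogram_eq_convexHull p A B ▸ ((finite_range _).isCompact_convexHull (𝕜 := ℝ)).isClosed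

theorem exists_mem_pm_one_add_half_mem {s : ℝ} (hs : s ∈ Icc (0 : ℝ) 1) :
    ∃ σ ∈ ({-1, 1} : Finset ℝ), s + σ / 2 ∈ Icc (0 : ℝ) 1 := by
  rcases le_or_gt s (1 / 2) with h | h
  · exact ⟨1, by simp, by constructor <;> linarith [hs.1]⟩
  · exact ⟨-1, by simp, by constructor <;> linarith [hs.2]⟩

theorem sq_sub_half_le {α : ℝ} (hα : α ∈ Icc (0 : ℝ) 1) : (α - 1 / 2) ^ 2 ≤ 1 / 4 := by
  nlinarith [hα.1, hα.2]

theorem sq_sub_half_eq_of_sq_add_sq {a b α β : ℝ} (ha : 0 < a) (hb : 0 < b)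
    (hα : α ∈ Icc (0 : ℝ) 1) (hβ : β ∈ Icc (0 : ℝ) 1)
    (h : (α - 1 / 2) ^ 2 * a + (β - 1 / 2) ^ 2 * b = (a + b) / 4) :
    (α - 1 / 2) ^ 2 = 1 / 4 ∧ (β - 1 / 2) ^ 2 = 1 / 4 := by
  have hα' := sq_sub_half_le hα
  have hβ' := sq_sub_half_le hβ
  constructor <;> nlinarith [mul_le_mul_of_nonneg_right hα' ha.le,
    mul_le_mul_of_nonneg_right hβ' hb.le]

theorem sub_half_eq_of_sub_mul_mem {α σ δ : ℝ} (hα : (α - 1 / 2) ^ 2 = 1 / 4)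
    (hσ : σ ∈ ({-1, 1} : Finset ℝ)) (hδ : 0 < δ) (h : α - δ * σ ∈ Icc (0 : ℝ) 1) :
    α - 1 / 2 = σ / 2 := by
  have hα01 : α = 0 ∨ α = 1 := by
    rcases mul_eq_zero.1 (by linear_combination hα : α * (α - 1) = 0) with h | h
    exacts [Or.inl h, Or.inr (sub_eq_zero.1 h)]
  simp only [Finset.mem_insert, Finset.mem_singleton] at hσ
  rcases hα01 with rfl | rfl <;> rcases hσ with rfl | rfl <;> norm_num at h ⊢ <;>
    linarith [h.1, h.2]

section RectangleBox

variable {E : Type*} [NormedAddCommGroup E] [InnerProductSpace ℝ E] {p A B : E}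

theorem norm_smul_add_smul_sq (hAB : ⟪A, B⟫ = 0) (s t : ℝ) :
    ‖s • A + t • B‖ ^ 2 = s ^ 2 * ‖A‖ ^ 2 + t ^ 2 * ‖B‖ ^ 2 := by
  rw [norm_add_sq_real, real_inner_smul_left, real_inner_smul_right, hAB, norm_smul, norm_smul,
    mul_pow, mul_pow, Real.norm_eq_abs, Real.norm_eq_abs, sq_abs, sq_abs]
  ring

theorem eq_of_smul_add_smul_eq (hA : A ≠ 0) (hAB : ⟪A, B⟫ = 0) {s t s' t' : ℝ}
    (h : s • A + t • B = s' • A + t' • B) : s = s' := by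
  have := congrArg (⟪A, ·⟫) h
  simp only [inner_add_right, real_inner_smul_right, hAB, real_inner_self_eq_norm_sq, mul_zero,
    add_zero] at this
  exact mul_right_cancel₀ (pow_pos (norm_pos_iff.2 hA) 2).ne' this

theorem add_smul_add_smul_mem_parallelogram_iff (hA : A ≠ 0) (hB : B ≠ 0) (hAB : ⟪A, B⟫ = 0)
    {s t : ℝ} :
    p + s • A + t • B ∈ parallelogram p A B ↔ s ∈ Icc (0 : ℝ) 1 ∧ t ∈ Icc (0 : ℝ) 1 := by
  refine ⟨fun ⟨s', hs', t', ht', h⟩ => ?_, fun ⟨hs, ht⟩ => ⟨s, hs, t, ht, rfl⟩⟩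
  rw [add_assoc, add_assoc, add_right_inj] at h
  have hBA : ⟪B, A⟫ = 0 := by rw [real_inner_comm, hAB]
  have ht : t = t' := eq_of_smul_add_smul_eq hB hBA (by rw [add_comm, h, add_comm])
  exact ⟨eq_of_smul_add_smul_eq hA hAB h ▸ hs', ht ▸ ht'⟩

theorem norm_add_sq_of_inner_eq_zero (hAB : ⟪A, B⟫ = 0) : ‖A + B‖ ^ 2 = ‖A‖ ^ 2 + ‖B‖ ^ 2 := by
  simpa using norm_smul_add_smul_sq hAB 1 1

theorem norm_add_pos_of_inner_eq_zero (hA : A ≠ 0) (hAB : ⟪A, B⟫ = 0) : 0 < ‖A + B‖ := by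
  refine norm_pos_iff.2 fun h => ?_
  have := norm_add_sq_of_inner_eq_zero hAB
  rw [h, norm_zero] at this
  nlinarith [pow_pos (norm_pos_iff.2 hA) 2, sq_nonneg ‖B‖]

theorem half_norm_smul_inv_smul (hA : A ≠ 0) (hAB : ⟪A, B⟫ = 0) (x : E) :
    (‖A + B‖ / 2) • ‖A + B‖⁻¹ • x = (1 / 2 : ℝ) • x := by
  rw [smul_smul, div_mul_eq_mul_div, mul_inv_cancel₀ (norm_add_pos_of_inner_eq_zero hA hAB).ne']

theorem norm_inv_smul_pm_one (hA : A ≠ 0) (hAB : ⟪A, B⟫ = 0) {σ τ : ℝ}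
    (hσ : σ ∈ ({-1, 1} : Finset ℝ)) (hτ : τ ∈ ({-1, 1} : Finset ℝ)) :
    ‖‖A + B‖⁻¹ • (σ • A + τ • B)‖ = 1 := by
  have hsq : σ ^ 2 = 1 ∧ τ ^ 2 = 1 := by
    simp only [Finset.mem_insert, Finset.mem_singleton] at hσ hτ
    constructor <;> [rcases hσ with rfl | rfl; rcases hτ with rfl | rfl] <;> norm_num
  have hnorm : ‖σ • A + τ • B‖ = ‖A + B‖ := by
    rw [← sq_eq_sq₀ (norm_nonneg _) (norm_nonneg _), norm_smul_add_smul_sq hAB, hsq.1, hsq.2,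
      norm_add_sq_of_inner_eq_zero hAB, one_mul, one_mul]
  rw [norm_smul, hnorm, norm_inv, norm_norm,
    inv_mul_cancel₀ (norm_add_pos_of_inner_eq_zero hA hAB).ne']

/-- The direction `-(σ • A + τ • B)`, feasible at the centre, is carried by an illuminating
direction `r` to a point of the circumsphere where it is still feasible; this pins down
`r`. -/
theorem smul_mem_of_tIlluminates_parallelogram (hA : A ≠ 0) (hB : B ≠ 0) (hAB : ⟪A, B⟫ = 0)
    {S : Finset E} (hS : TIlluminates (parallelogram p A B) (‖A + B‖ / 2) S)
    (hunit : ∀ r ∈ S, ‖r‖ = 1) {σ τ : ℝ} (hσ : σ ∈ ({-1, 1} : Finset ℝ))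
    (hτ : τ ∈ ({-1, 1} : Finset ℝ)) : ‖A + B‖⁻¹ • (σ • A + τ • B) ∈ S := by
  have hmem := fun {s t : ℝ} =>
    add_smul_add_smul_mem_parallelogram_iff (p := p) (s := s) (t := t) hA hB hAB
  set c := p + (1 / 2 : ℝ) • A + (1 / 2 : ℝ) • B
  have hIcc : ∀ ρ ∈ ({-1, 1} : Finset ℝ), 1 / 2 - 1 / 2 * ρ ∈ Icc (0 : ℝ) 1 := by
    intro ρ hρ
    simp only [Finset.mem_insert, Finset.mem_singleton] at hρ
    rcases hρ with rfl | rfl <;> norm_num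
  have hcK : c ∈ parallelogram p A B := hmem.2 ⟨by norm_num, by norm_num⟩
  have hfeas : IsFeasibleDir (parallelogram p A B) c (-(σ • A + τ • B)) :=
    ⟨1 / 2, by norm_num, by
      convert hmem.2 ⟨hIcc σ hσ, hIcc τ hτ⟩ using 1
      module⟩
  obtain ⟨r, hr, htK, δ, hδ, htδ⟩ := hS.exists_isFeasibleDir (convex_parallelogram p A B)
    (isClosed_parallelogram p A B) hcK hfeas
  obtain ⟨α, hα, β, hβ, ht⟩ := htK
  have hR : (‖A + B‖ / 2) • r = (α - 1 / 2) • A + (β - 1 / 2) • B := by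
    rw [← add_right_inj c, ht]; module
  have hsq := sq_sub_half_eq_of_sq_add_sq (pow_pos (norm_pos_iff.2 hA) 2)
    (pow_pos (norm_pos_iff.2 hB) 2) hα hβ
    (by
      rw [← norm_smul_add_smul_sq hAB, ← hR, norm_smul, hunit r hr, mul_one,
        Real.norm_of_nonneg (by positivity), div_pow, norm_add_sq_of_inner_eq_zero hAB]
      ring)
  rw [ht, show p + α • A + β • B + δ • -(σ • A + τ • B)
      = p + (α - δ * σ) • A + (β - δ * τ) • B by module] at htδ
  obtain ⟨hδα, hδβ⟩ := hmem.1 htδ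
  rw [sub_half_eq_of_sub_mul_mem hsq.1 hσ hδ hδα, sub_half_eq_of_sub_mul_mem hsq.2 hτ hδ hδβ] at hR
  have hr' : r = ‖A + B‖⁻¹ • (σ • A + τ • B) := by
    rw [← one_smul ℝ r, ← inv_mul_cancel₀ (half_pos (norm_add_pos_of_inner_eq_zero hA hAB)).ne',
      mul_smul, hR]
    module
  exact hr' ▸ hr

variable [DecidableEq E]

noncomputable def diagonalDirs (A B : E) : Finset E :=
  (({-1, 1} : Finset ℝ) ×ˢ ({-1, 1} : Finset ℝ)).image
    fun στ => ‖A + B‖⁻¹ • (στ.1 • A + στ.2 • B)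

theorem mem_diagonalDirs {r : E} :
    r ∈ diagonalDirs A B ↔ ∃ σ ∈ ({-1, 1} : Finset ℝ), ∃ τ ∈ ({-1, 1} : Finset ℝ),
      ‖A + B‖⁻¹ • (σ • A + τ • B) = r := by
  simp [diagonalDirs, and_assoc]

theorem norm_of_mem_diagonalDirs (hA : A ≠ 0) (hAB : ⟪A, B⟫ = 0) {r : E}
    (hr : r ∈ diagonalDirs A B) : ‖r‖ = 1 := by
  obtain ⟨σ, hσ, τ, hτ, rfl⟩ := mem_diagonalDirs.1 hr
  exact norm_inv_smul_pm_one hA hAB hσ hτ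

theorem card_diagonalDirs (hA : A ≠ 0) (hB : B ≠ 0) (hAB : ⟪A, B⟫ = 0) :
    (diagonalDirs A B).card = 4 := by
  rw [diagonalDirs, Finset.card_image_of_injOn, Finset.card_product,
    Finset.card_pair (by norm_num)]
  rintro ⟨σ, τ⟩ - ⟨σ', τ'⟩ - h
  have h' := smul_right_injective E (inv_ne_zero (norm_add_pos_of_inner_eq_zero hA hAB).ne') h
  have hBA : ⟪B, A⟫ = 0 := by rw [real_inner_comm, hAB]
  exact Prod.ext (eq_of_smul_add_smul_eq hA hAB h')
    (eq_of_smul_add_smul_eq hB hBA (s := τ) (t := σ) (s' := τ') (t' := σ')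
      (by rw [add_comm, h', add_comm]))

theorem tIlluminates_parallelogram_diagonalDirs (hA : A ≠ 0) (hAB : ⟪A, B⟫ = 0) :
    TIlluminates (parallelogram p A B) (‖A + B‖ / 2) (diagonalDirs A B) := by
  rintro _ ⟨s, hs, t, ht, rfl⟩
  obtain ⟨σ, hσ, hs'⟩ := exists_mem_pm_one_add_half_mem hs
  obtain ⟨τ, hτ, ht'⟩ := exists_mem_pm_one_add_half_mem ht
  refine ⟨_, mem_diagonalDirs.2 ⟨σ, hσ, τ, hτ, rfl⟩, s + σ / 2, hs', t + τ / 2, ht', ?_⟩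
  rw [half_norm_smul_inv_smul hA hAB]
  module

theorem diagonalDirs_subset_of_tIlluminates (hA : A ≠ 0) (hB : B ≠ 0) (hAB : ⟪A, B⟫ = 0)
    {S : Finset E} (hS : TIlluminates (parallelogram p A B) (‖A + B‖ / 2) S)
    (hunit : ∀ r ∈ S, ‖r‖ = 1) : diagonalDirs A B ⊆ S := fun r hr => by
  obtain ⟨σ, hσ, τ, hτ, rfl⟩ := mem_diagonalDirs.1 hr
  exact smul_mem_of_tIlluminates_parallelogram hA hB hAB hS hunit hσ hτ

end RectangleBox

theorem exists_tIlluminates_of_iq_lt_top {n : ℕ} {K : Set (EuclideanSpace ℝ (Fin n))} {ε : ℝ}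
    (h : iq K ε < ⊤) : ∃ s, (∀ r ∈ s, ‖r‖ = 1) ∧ TIlluminates K ε s := by
  obtain ⟨_, ⟨s, -, hu, hs⟩, -⟩ := sInf_lt_iff.1 h
  exact ⟨s, hu, hs⟩

theorem iq_parallelogram {n : ℕ} {p A B : EuclideanSpace ℝ (Fin n)} (hA : A ≠ 0) (hB : B ≠ 0)
    (hAB : ⟪A, B⟫ = 0) : iq (parallelogram p A B) (‖A + B‖ / 2) = 4 := by
  classical
  refine le_antisymm (sInf_le ⟨diagonalDirs A B, by rw [card_diagonalDirs hA hB hAB]; rfl,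
    fun r => norm_of_mem_diagonalDirs hA hAB, tIlluminates_parallelogram_diagonalDirs hA hAB⟩)
    (le_sInf ?_)
  rintro _ ⟨S, rfl, hunit, hS⟩
  exact_mod_cast card_diagonalDirs hA hB hAB ▸
    Finset.card_le_card (diagonalDirs_subset_of_tIlluminates hA hB hAB hS hunit)

theorem IsCircumball.radius_parallelogram {n : ℕ} {p A B c : EuclideanSpace ℝ (Fin n)} {R : ℝ}
    (hAB : ⟪A, B⟫ = 0) (h : IsCircumball (parallelogram p A B) c R) : R = ‖A + B‖ / 2 := by
  have hI : (0 : ℝ) ∈ Icc (0 : ℝ) 1 ∧ (1 : ℝ) ∈ Icc (0 : ℝ) 1 :=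
    ⟨⟨le_rfl, zero_le_one⟩, ⟨zero_le_one, le_rfl⟩⟩
  have hp := mem_closedBall.1
    (h.1 (show p ∈ parallelogram p A B from ⟨0, hI.1, 0, hI.1, by simp⟩))
  have hq := mem_closedBall.1 (h.1 (show p + (1 : ℝ) • A + (1 : ℝ) • B ∈ parallelogram p A B from
    ⟨1, hI.2, 1, hI.2, rfl⟩))
  have hdiam : ‖A + B‖ ≤ 2 * R := by
    have := dist_triangle_right (p + (1 : ℝ) • A + (1 : ℝ) • B) p c
    rw [dist_eq_norm, show p + (1 : ℝ) • A + (1 : ℝ) • B - p = A + B by module] at this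
    linarith
  have hsq := h.sq_le_of_forall_norm_sub_sq_le (c' := p + (1 / 2 : ℝ) • (A + B))
    (ρ := (‖A + B‖ / 2) ^ 2) (by
      rintro _ ⟨s, hs, t, ht, rfl⟩
      rw [show p + s • A + t • B - (p + (1 / 2 : ℝ) • (A + B)) = (s - 1 / 2) • A + (t - 1 / 2) • B
        by module, norm_smul_add_smul_sq hAB, div_pow, norm_add_sq_of_inner_eq_zero hAB]
      nlinarith [mul_le_mul_of_nonneg_right (sq_sub_half_le hs) (sq_nonneg ‖A‖),
        mul_le_mul_of_nonneg_right (sq_sub_half_le ht) (sq_nonneg ‖B‖)])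
  nlinarith [norm_nonneg (A + B)]

theorem iq_quadrangle_at_circumradius_general (v : Fin 4 → EuclideanSpace ℝ (Fin 2))
    (Q : Set (EuclideanSpace ℝ (Fin 2))) (hQ : Q = convexHull ℝ (Set.range v))
    (hint : (interior Q).Nonempty)
    (hcyc : ∀ i : Fin 4, segment ℝ (v i) (v (i + 1)) ⊆ frontier Q)
    (c : EuclideanSpace ℝ (Fin 2)) (R : ℝ) (hcirc : IsCircumball Q c R) :
    (iq Q R < ⊤ ↔ ∀ i : Fin 4, ⟪v (i + 1) - v i, v (i - 1) - v i⟫ = 0) ∧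
    ((∀ i : Fin 4, ⟪v (i + 1) - v i, v (i - 1) - v i⟫ = 0) → iq Q R = 4) := by
  subst hQ
  have hiq : IsRectangle v → iq (convexHull ℝ (range v)) R = 4 := fun hrect => by
    rw [convexHull_range_eq_parallelogram (hrect.add_eq_add hint)] at hcirc ⊢
    rw [hcirc.radius_parallelogram (hrect 0)]
    exact iq_parallelogram (sub_ne_zero.2 (hrect.add_one_ne hint 0))
      (sub_ne_zero.2 (hrect.add_one_ne hint 3).symm) (hrect 0)
  refine ⟨⟨fun hlt => ?_, fun hrect => hiq hrect ▸ ENat.natCast_lt_top 4⟩, hiq⟩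
  obtain ⟨s, hunit, hs⟩ := exists_tIlluminates_of_iq_lt_top hlt
  exact isRectangle_of_tIlluminates hint hcyc hcirc hs hunit

/-- Example (γ): a convex quadrangle `Q ⊆ ℝ²` (vertices `v 0, v 1, v 2, v 3` in cyclic order,
each an extreme point of `Q`) satisfies `i(Q,R(Q)) < ∞` iff `Q` is a rectangle (all four of
its interior angles are right angles); in that case `i(Q,R(Q)) = 4`. -/
theorem iq_quadrangle_at_circumradius (v : Fin 4 → EuclideanSpace ℝ (Fin 2))
    (Q : Set (EuclideanSpace ℝ (Fin 2))) (hQ : Q = convexHull ℝ (Set.range v))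
    (hvert : ∀ i, v i ∈ Set.extremePoints ℝ Q)
    (hint : (interior Q).Nonempty)
    (hcyc : ∀ i : Fin 4, segment ℝ (v i) (v (i + 1)) ⊆ frontier Q)
    (c : EuclideanSpace ℝ (Fin 2)) (R : ℝ) (hcirc : IsCircumball Q c R) :
    (iq Q R < ⊤ ↔ ∀ i : Fin 4, ⟪v (i + 1) - v i, v (i - 1) - v i⟫ = 0) ∧
    ((∀ i : Fin 4, ⟪v (i + 1) - v i, v (i - 1) - v i⟫ = 0) → iq Q R = 4) :=
  iq_quadrangle_at_circumradius_general v Q hQ hint hcyc c R hcirc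
end
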